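/- arXiv:1903.01774 — 6 statements merged into one kernel-verified Lean document; each statement's English description precedes it below -/
import Mathlib

section
/- Suppose F : 𝒞 → ℝⁿ is almost locally Lipschitz. Let φ ∈ 𝒞 with lip φ < ∞, let t₀ ∈ ℝ and α > 0. If y, z : [t₀−h, t₀+α] → ℝⁿ are both solutions of x'(t) = F(x_t) (t ≥ t₀), x_{t₀} = φ, then y(t) = z(t) for all t ∈ [t₀, t₀+α]. -/
/-! A solution with a Lipschitz initial history is Lipschitz on all of `[t₀ - h, t₀ + α]`,
since its derivative `F (x_t)` is continuous, hence bounded, there. So all segments `y_t`, `z_t`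
satisfy `lip ≤ R` for one `R`, and near `y_T` the functional `F` is `k`-Lipschitz on
`V(y_T; δ, R)`. If `y_T = z_T`, then on a short interval `[T, T + ε]` with `k ε < 1` on which the
segments stay in that set, the maximum `m` of `|y - z|` satisfies `m ≤ k ε m`, so `m = 0`. As
`{t | y_t = z_t}` is closed and contains `t₀`, continuous induction gives `y_t = z_t` on
`[t₀, t₀ + α]`. -/

open scoped ENNReal

noncomputable section

/-- The state space 𝒞 = C([-h,0], ℝⁿ) with the sup-norm. -/
abbrev Hist (h : ℝ) (n : ℕ) : Type :=
  C(Set.Icc (-h) (0:ℝ), Fin n → ℝ)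

/-- The segment x_t ∈ 𝒞 of a continuous function x : ℝ → ℝⁿ, x_t(θ) = x(t+θ). -/
def seg {h : ℝ} {n : ℕ} (x : C(ℝ, Fin n → ℝ)) (t : ℝ) : Hist h n :=
  ⟨fun θ => x (t + θ.1), x.continuous.comp (continuous_const.add continuous_subtype_val)⟩

/-- `LipBdd R φ` means `lip φ ≤ R`, i.e. φ is R-Lipschitz. -/
def LipBdd {h : ℝ} {n : ℕ} (R : ℝ) (φ : Hist h n) : Prop :=
  ∀ s t : Set.Icc (-h) (0:ℝ), ‖φ s - φ t‖ ≤ R * |s.1 - t.1|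

/-- `lip φ < ∞`. -/
def LipFin {h : ℝ} {n : ℕ} (φ : Hist h n) : Prop := ∃ R : ℝ, LipBdd R φ

/-- V(φ₀; δ, R) = { φ : ‖φ-φ₀‖ ≤ δ, lip φ ≤ R }. -/
def Vset {h : ℝ} {n : ℕ} (φ₀ : Hist h n) (δ R : ℝ) : Set (Hist h n) :=
  {φ | ‖φ - φ₀‖ ≤ δ ∧ LipBdd R φ}

/-- A functional f : 𝒟 ⊆ 𝒞 → E is almost locally Lipschitz. -/
def AlmostLocLip {h : ℝ} {n : ℕ} (𝒟 : Set (Hist h n)) {E : Type*} [NormedAddCommGroup E]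
    (f : Hist h n → E) : Prop :=
  ContinuousOn f 𝒟 ∧ ∀ φ₀ ∈ 𝒟, ∀ R : ℝ, 0 < R → ∃ δ : ℝ, 0 < δ ∧ ∃ k : ℝ, 0 ≤ k ∧
    ∀ φ ∈ Vset φ₀ δ R ∩ 𝒟, ∀ ψ ∈ Vset φ₀ δ R ∩ 𝒟, ‖f φ - f ψ‖ ≤ k * ‖φ - ψ‖

/-- Solution of x'(t) = f(x_t) (t₀ ≤ t ≤ t₀+α), x_{t₀} = φ, on the closed interval
[t₀-h, t₀+α], for a functional with domain 𝒟. -/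
def IsSolIcc {h : ℝ} {n : ℕ} (𝒟 : Set (Hist h n)) (f : Hist h n → Fin n → ℝ)
    (t₀ α : ℝ) (φ : Hist h n) (x : C(ℝ, Fin n → ℝ)) : Prop :=
  seg x t₀ = φ ∧ ∀ t ∈ Set.Icc t₀ (t₀ + α),
    seg (h := h) x t ∈ 𝒟 ∧ HasDerivAt (fun s => x s) (f (seg x t)) t

/-- Solution on the half-open interval [t₀-h, t₀+c), where c ∈ (0,∞]. -/
def IsSolIco {h : ℝ} {n : ℕ} (𝒟 : Set (Hist h n)) (f : Hist h n → Fin n → ℝ)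
    (t₀ : ℝ) (c : ℝ≥0∞) (φ : Hist h n) (x : C(ℝ, Fin n → ℝ)) : Prop :=
  seg x t₀ = φ ∧ ∀ t : ℝ, t₀ ≤ t → ENNReal.ofReal (t - t₀) < c →
    seg (h := h) x t ∈ 𝒟 ∧ HasDerivAt (fun s => x s) (f (seg x t)) t

/-- A non-continuable solution on [t₀-h, t₀+c): it admits no extension to a solution
on a strictly larger interval. -/
def Noncontinuable {h : ℝ} {n : ℕ} (𝒟 : Set (Hist h n)) (f : Hist h n → Fin n → ℝ)
    (t₀ : ℝ) (c : ℝ≥0∞) (φ : Hist h n) (x : C(ℝ, Fin n → ℝ)) : Prop :=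
  IsSolIco 𝒟 f t₀ c φ x ∧
    ¬ ∃ c' : ℝ≥0∞, c < c' ∧ ∃ x' : C(ℝ, Fin n → ℝ), IsSolIco 𝒟 f t₀ c' φ x' ∧
      ∀ t : ℝ, t₀ - h ≤ t → ENNReal.ofReal (t - t₀) < c → x' t = x t

open Set Filter Topology

lemma LipBdd.mono {h R R' : ℝ} {n : ℕ} {φ : Hist h n} (hφ : LipBdd R φ) (hRR' : R ≤ R') :
    LipBdd R' φ :=
  fun s t => (hφ s t).trans (mul_le_mul_of_nonneg_right hRR' (abs_nonneg _))

lemma LipBdd.lipschitzWith {h R : ℝ} {n : ℕ} {φ : Hist h n} (hφ : LipBdd R φ) :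
    LipschitzWith R.toNNReal φ :=
  LipschitzWith.of_dist_le_mul fun s t => by
    rw [dist_eq_norm, Subtype.dist_eq, Real.dist_eq]
    exact (hφ s t).trans (mul_le_mul_of_nonneg_right (Real.le_coe_toNNReal R) (abs_nonneg _))

lemma LipschitzWith.lipBdd {h : ℝ} {n : ℕ} {K : NNReal} {φ : Hist h n} (hφ : LipschitzWith K φ) :
    LipBdd K φ := fun s t => by
  simpa only [dist_eq_norm, Subtype.dist_eq, Real.norm_eq_abs] using hφ.dist_le_mul s t

lemma LipschitzOnWith.glue_Icc {α : Type*} [PseudoMetricSpace α] {f : ℝ → α} {K : NNReal}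
    {a b c : ℝ} (hab : LipschitzOnWith K f (Icc a b)) (hbc : LipschitzOnWith K f (Icc b c)) :
    LipschitzOnWith K f (Icc a c) := by
  refine LipschitzOnWith.of_dist_le_mul fun x hx y hy => ?_
  wlog hxy : x ≤ y generalizing x y
  · rw [dist_comm, dist_comm x]
    exact this y hy x hx (le_of_not_ge hxy)
  rcases le_total y b with hyb | hby
  · exact hab.dist_le_mul x ⟨hx.1, hxy.trans hyb⟩ y ⟨hy.1, hyb⟩
  rcases le_total b x with hbx | hxb
  · exact hbc.dist_le_mul x ⟨hbx, hx.2⟩ y ⟨hby, hy.2⟩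
  have hb_ab : b ∈ Icc a b := ⟨hx.1.trans hxb, le_rfl⟩
  have hb_bc : b ∈ Icc b c := ⟨le_rfl, hby.trans hy.2⟩
  calc dist (f x) (f y) ≤ dist (f x) (f b) + dist (f b) (f y) := dist_triangle _ _ _
    _ ≤ K * dist x b + K * dist b y :=
        add_le_add (hab.dist_le_mul x ⟨hx.1, hxb⟩ b hb_ab) (hbc.dist_le_mul b hb_bc y ⟨hby, hy.2⟩)
    _ = K * dist x y := by
        rw [Real.dist_eq, Real.dist_eq, Real.dist_eq, abs_of_nonpos (by linarith),
          abs_of_nonpos (by linarith), abs_of_nonpos (by linarith)]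
        ring

section Segments

variable {h : ℝ} {n : ℕ}

lemma continuous_seg (x : C(ℝ, Fin n → ℝ)) : Continuous (fun t => seg (h := h) x t) :=
  ContinuousMap.continuous_of_continuous_uncurry _
    (x.continuous.comp (continuous_fst.add (continuous_subtype_val.comp continuous_snd)))

lemma apply_eq_of_seg_eq {x : C(ℝ, Fin n → ℝ)} {t₀ : ℝ} {φ : Hist h n} (hx : seg x t₀ = φ)
    {s : ℝ} (hs : s ∈ Icc (t₀ - h) t₀) :
    x s = φ ⟨s - t₀, by constructor <;> linarith [hs.1, hs.2]⟩ := by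
  rw [← hx]
  simp [seg]

lemma lipschitzOnWith_of_seg_eq {x : C(ℝ, Fin n → ℝ)} {t₀ : ℝ} {φ : Hist h n} {K : NNReal}
    (hx : seg x t₀ = φ) (hφ : LipschitzWith K φ) : LipschitzOnWith K x (Icc (t₀ - h) t₀) :=
  LipschitzOnWith.of_dist_le_mul fun s hs u hu => by
    rw [apply_eq_of_seg_eq hx hs, apply_eq_of_seg_eq hx hu]
    refine (hφ.dist_le_mul _ _).trans_eq ?_
    rw [Subtype.dist_eq, dist_sub_right]

lemma lipschitzWith_seg {x : C(ℝ, Fin n → ℝ)} {K : NNReal} {a b t : ℝ}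
    (hx : LipschitzOnWith K x (Icc a b)) (ha : a ≤ t - h) (hb : t ≤ b) :
    LipschitzWith K (seg (h := h) x t) :=
  LipschitzWith.of_dist_le_mul fun θ₁ θ₂ => by
    have hmem : ∀ θ : Icc (-h) (0 : ℝ), t + θ.1 ∈ Icc a b := fun θ =>
      ⟨by linarith [θ.2.1], by linarith [θ.2.2]⟩
    refine (hx.dist_le_mul _ (hmem θ₁) _ (hmem θ₂)).trans_eq ?_
    rw [Subtype.dist_eq, dist_add_left]

lemma norm_seg_sub_le {x y : C(ℝ, Fin n → ℝ)} {T t M : ℝ} (hTt : T ≤ t)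
    (hT : seg (h := h) x T = seg y T) (hM₀ : 0 ≤ M) (hM : ∀ u ∈ Icc T t, ‖x u - y u‖ ≤ M) :
    ‖seg (h := h) x t - seg y t‖ ≤ M := by
  refine (ContinuousMap.norm_le _ hM₀).mpr fun θ => ?_
  change ‖x (t + θ.1) - y (t + θ.1)‖ ≤ M
  rcases le_total (t + θ.1) T with hle | hge
  · have hmem : t + θ.1 ∈ Icc (T - h) T := ⟨by linarith [θ.2.1], hle⟩
    rw [apply_eq_of_seg_eq hT hmem, apply_eq_of_seg_eq rfl hmem, sub_self, norm_zero]
    exact hM₀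
  · exact hM _ ⟨hge, by linarith [θ.2.2]⟩

end Segments

lemma eqOn_zero_of_norm_deriv_le_mul_bound {E : Type*} [NormedAddCommGroup E] [NormedSpace ℝ E]
    {f f' : ℝ → E} {a b k : ℝ} (hf : ∀ t ∈ Icc a b, HasDerivWithinAt f (f' t) (Icc a b) t)
    (ha : f a = 0) (hk₀ : 0 ≤ k) (hk : k * (b - a) < 1)
    (hf' : ∀ M, (∀ t ∈ Icc a b, ‖f t‖ ≤ M) → ∀ t ∈ Icc a b, ‖f' t‖ ≤ k * M) :
    EqOn f 0 (Icc a b) := by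
  intro t ht
  have hab : a ≤ b := ht.1.trans ht.2
  obtain ⟨tm, htm, hmax⟩ := isCompact_Icc.exists_isMaxOn (nonempty_Icc.2 hab)
    (fun u hu => (hf u hu).continuousWithinAt.norm)
  set M := ‖f tm‖
  have hM₀ : 0 ≤ M := norm_nonneg _
  have hmean : ‖f tm - f a‖ ≤ k * M * ‖tm - a‖ :=
    (convex_Icc a b).norm_image_sub_le_of_norm_hasDerivWithin_le hf
      (hf' M fun u hu => hmax hu) (left_mem_Icc.2 hab) htm
  rw [ha, sub_zero, Real.norm_of_nonneg (by linarith [htm.1])] at hmean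
  have hM : M = 0 := by
    have : k * M * (tm - a) ≤ k * M * (b - a) :=
      mul_le_mul_of_nonneg_left (by linarith [htm.2]) (mul_nonneg hk₀ hM₀)
    nlinarith
  exact norm_le_zero_iff.mp (hM ▸ hmax ht)

section Solutions

variable {h : ℝ} {n : ℕ} {𝒟 : Set (Hist h n)} {F : Hist h n → Fin n → ℝ} {t₀ α : ℝ}
  {φ : Hist h n}

lemma eq_of_seg_eq (hh : 0 ≤ h) {x y : C(ℝ, Fin n → ℝ)} {t : ℝ}
    (hxy : seg (h := h) x t = seg y t) : x t = y t := by
  simpa [seg] using DFunLike.congr_fun hxy ⟨0, by simpa using hh, le_rfl⟩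

lemma IsSolIcc.exists_lipBdd_seg {x : C(ℝ, Fin n → ℝ)} (hF : ContinuousOn F 𝒟)
    (hφ : LipFin φ) (hx : IsSolIcc 𝒟 F t₀ α φ x) :
    ∃ R, ∀ t ∈ Icc t₀ (t₀ + α), LipBdd R (seg (h := h) x t) := by
  obtain ⟨R₀, hR₀⟩ := hφ
  obtain ⟨C, hC⟩ := isCompact_Icc.exists_bound_of_continuousOn
    (hF.comp (continuous_seg x).continuousOn fun t ht => (hx.2 t ht).1)
  have hpast := lipschitzOnWith_of_seg_eq hx.1 hR₀.lipschitzWith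
  have hfuture : LipschitzOnWith C.toNNReal x (Icc t₀ (t₀ + α)) :=
    (convex_Icc _ _).lipschitzOnWith_of_nnnorm_hasDerivWithin_le
      (fun t ht => (hx.2 t ht).2.hasDerivWithinAt)
      fun t ht => by simpa [norm_toNNReal] using Real.toNNReal_le_toNNReal (hC t ht)
  have hx_lip := (hpast.weaken (le_max_left _ C.toNNReal)).glue_Icc
    (hfuture.weaken (le_max_right R₀.toNNReal _))
  exact ⟨_, fun t ht => (lipschitzWith_seg hx_lip (by linarith [ht.1]) ht.2).lipBdd⟩

lemma eqOn_seg_Icc_of_forall_mem_Vset (hh : 0 ≤ h) {y z : C(ℝ, Fin n → ℝ)} {ψ : Hist h n}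
    {δ R k T ε : ℝ} (hk : 0 ≤ k) (hkε : k * ε < 1)
    (hloc : ∀ φ ∈ Vset ψ δ R ∩ 𝒟, ∀ φ' ∈ Vset ψ δ R ∩ 𝒟, ‖F φ - F φ'‖ ≤ k * ‖φ - φ'‖)
    (hy : ∀ t ∈ Icc T (T + ε),
      seg (h := h) y t ∈ Vset ψ δ R ∩ 𝒟 ∧ HasDerivAt (fun s => y s) (F (seg y t)) t)
    (hz : ∀ t ∈ Icc T (T + ε),
      seg (h := h) z t ∈ Vset ψ δ R ∩ 𝒟 ∧ HasDerivAt (fun s => z s) (F (seg z t)) t)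
    (hT : seg (h := h) y T = seg z T) :
    EqOn (fun t => seg (h := h) y t) (fun t => seg z t) (Icc T (T + ε)) := by
  have hagree : EqOn (fun t => y t - z t) 0 (Icc T (T + ε)) := by
    refine eqOn_zero_of_norm_deriv_le_mul_bound
      (f' := fun t => F (seg (h := h) y t) - F (seg (h := h) z t))
      (fun t ht => ((hy t ht).2.sub (hz t ht).2).hasDerivWithinAt)
      (sub_eq_zero.2 (eq_of_seg_eq hh hT)) hk (by simpa using hkε) fun M hM t ht => ?_
    have hM₀ : 0 ≤ M := (norm_nonneg _).trans (hM T (left_mem_Icc.2 (ht.1.trans ht.2)))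
    exact (hloc _ (hy t ht).1 _ (hz t ht).1).trans (mul_le_mul_of_nonneg_left
      (norm_seg_sub_le ht.1 hT hM₀ fun u hu => hM u ⟨hu.1, hu.2.trans ht.2⟩) hk)
  intro t ht
  refine sub_eq_zero.1 (norm_le_zero_iff.1 (norm_seg_sub_le ht.1 hT le_rfl fun u hu => ?_))
  simpa [sub_eq_zero] using hagree ⟨hu.1, hu.2.trans ht.2⟩

lemma IsSolIcc.eventually_seg_eq (hh : 0 ≤ h) (hF : AlmostLocLip 𝒟 F) {y z : C(ℝ, Fin n → ℝ)}
    (hy : IsSolIcc 𝒟 F t₀ α φ y) (hz : IsSolIcc 𝒟 F t₀ α φ z) {R : ℝ} (hR : 0 < R)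
    (hyR : ∀ t ∈ Icc t₀ (t₀ + α), LipBdd R (seg (h := h) y t))
    (hzR : ∀ t ∈ Icc t₀ (t₀ + α), LipBdd R (seg (h := h) z t))
    {T : ℝ} (hT : T ∈ Ico t₀ (t₀ + α)) (hTseg : seg (h := h) y T = seg z T) :
    ∀ᶠ t in 𝓝[>] T, seg (h := h) y t = seg z t := by
  set ψ := seg (h := h) y T
  obtain ⟨δ, hδ, k, hk, hloc⟩ := hF.2 ψ (hy.2 T (Ico_subset_Icc_self hT)).1 R hR
  have hnear : ∀ᶠ t in 𝓝 T, ‖seg (h := h) y t - ψ‖ ≤ δ ∧ ‖seg (h := h) z t - ψ‖ ≤ δ := by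
    have hy_near := (continuous_seg y).continuousAt.preimage_mem_nhds
      (Metric.closedBall_mem_nhds ψ hδ)
    have hz_near := (continuous_seg z).continuousAt.preimage_mem_nhds
      (Metric.closedBall_mem_nhds (seg (h := h) z T) hδ)
    rw [← hTseg] at hz_near
    filter_upwards [hy_near, hz_near] with t hyt hzt
    exact ⟨mem_closedBall_iff_norm.mp hyt, mem_closedBall_iff_norm.mp hzt⟩
  obtain ⟨r, hr, hr_near⟩ := Metric.eventually_nhds_iff.mp hnear
  have hsmall : ∀ᶠ ε in 𝓝[>] (0 : ℝ), 0 < ε ∧ ε < r ∧ ε < t₀ + α - T ∧ k * ε < 1 := by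
    refine eventually_mem_nhdsWithin.and (nhdsWithin_le_nhds ?_)
    refine (gt_mem_nhds hr).and ((gt_mem_nhds (sub_pos.2 hT.2)).and ?_)
    exact (continuous_const.mul continuous_id).continuousAt.eventually_lt continuousAt_const
      (by simp)
  obtain ⟨ε, hε, hεr, hεα, hkε⟩ := hsmall.exists
  have hI : Icc T (T + ε) ⊆ Icc t₀ (t₀ + α) := fun t ht =>
    ⟨hT.1.trans ht.1, by linarith [ht.2]⟩
  have hdist : ∀ t ∈ Icc T (T + ε), dist t T < r := fun t ht => by
    rw [Real.dist_eq, abs_of_nonneg (by linarith [ht.1])]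
    linarith [ht.2]
  have hagree := eqOn_seg_Icc_of_forall_mem_Vset hh hk hkε hloc
    (fun t ht => ⟨⟨⟨(hr_near (hdist t ht)).1, hyR t (hI ht)⟩, (hy.2 t (hI ht)).1⟩,
      (hy.2 t (hI ht)).2⟩)
    (fun t ht => ⟨⟨⟨(hr_near (hdist t ht)).2, hzR t (hI ht)⟩, (hz.2 t (hI ht)).1⟩,
      (hz.2 t (hI ht)).2⟩) hTseg
  filter_upwards [Ioc_mem_nhdsGT (lt_add_of_pos_right T hε)] with t ht
  exact hagree (Ioc_subset_Icc_self ht)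

lemma IsSolIcc.seg_eq (hh : 0 ≤ h) (hF : AlmostLocLip 𝒟 F) (hφ : LipFin φ)
    {y z : C(ℝ, Fin n → ℝ)} (hy : IsSolIcc 𝒟 F t₀ α φ y) (hz : IsSolIcc 𝒟 F t₀ α φ z) :
    ∀ t ∈ Icc t₀ (t₀ + α), seg (h := h) y t = seg z t := by
  obtain ⟨Ry, hRy⟩ := hy.exists_lipBdd_seg hF.1 hφ
  obtain ⟨Rz, hRz⟩ := hz.exists_lipBdd_seg hF.1 hφ
  set R := max (max Ry Rz) 1
  have hR : 0 < R := one_pos.trans_le (le_max_right _ _)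
  have hyR : ∀ t ∈ Icc t₀ (t₀ + α), LipBdd R (seg (h := h) y t) := fun t ht =>
    (hRy t ht).mono ((le_max_left _ _).trans (le_max_left _ _))
  have hzR : ∀ t ∈ Icc t₀ (t₀ + α), LipBdd R (seg (h := h) z t) := fun t ht =>
    (hRz t ht).mono ((le_max_right _ _).trans (le_max_left _ _))
  intro t ht
  exact IsClosed.Icc_subset_of_forall_mem_nhdsWithin (s := {t | seg (h := h) y t = seg z t})
    ((isClosed_eq (continuous_seg y) (continuous_seg z)).inter isClosed_Icc)
    (hy.1.trans hz.1.symm) (fun T hT => hy.eventually_seg_eq hh hF hz hR hyR hzR hT.2 hT.1) ht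

end Solutions

theorem statement1_general (h : ℝ) (hh : 0 < h) (n : ℕ)
    (F : Hist h n → Fin n → ℝ) (hF : AlmostLocLip Set.univ F)
    (φ : Hist h n) (hφ : LipFin φ) (t₀ α : ℝ)
    (y z : C(ℝ, Fin n → ℝ))
    (hy : IsSolIcc Set.univ F t₀ α φ y) (hz : IsSolIcc Set.univ F t₀ α φ z) :
    ∀ t ∈ Set.Icc t₀ (t₀ + α), y t = z t :=
  fun t ht => eq_of_seg_eq hh.le (hy.seg_eq hh.le hF hφ hz t ht)

/-- Theorem 2.4. Uniqueness of solutions for an almost locally Lipschitz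
functional F : 𝒞 → ℝⁿ and a Lipschitz initial history φ. -/
theorem statement1 (h : ℝ) (hh : 0 < h) (n : ℕ) (hn : 1 ≤ n)
    (F : Hist h n → Fin n → ℝ) (hF : AlmostLocLip Set.univ F)
    (φ : Hist h n) (hφ : LipFin φ) (t₀ α : ℝ) (hα : 0 < α)
    (y z : C(ℝ, Fin n → ℝ))
    (hy : IsSolIcc Set.univ F t₀ α φ y) (hz : IsSolIcc Set.univ F t₀ α φ z) :
    ∀ t ∈ Set.Icc t₀ (t₀ + α), y t = z t :=
  statement1_general h hh n F hF φ hφ t₀ α y z hy hz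
end
end

section
/- Suppose f : 𝒟 → ℝⁿ satisfies condition (F). Fix φ ∈ 𝒟 and assume x : [t₀−h, t₀+α] → ℝⁿ is continuous with x_{t₀} = φ, differentiable on [t₀, t₀+α], and satisfies x'(t) = f(ρ(x_t)) for all t ∈ [t₀, t₀+α]. Then x_t ∈ 𝒟 for all t ∈ [t₀, t₀+α] (i.e. xᵢ(t+θ) ≥ −B for all i, all t ∈ [t₀,t₀+α] and θ ∈ [-h,0]); consequently ρ(x_t) = x_t for all such t, and x is a solution of x'(t) = f(x_t), x_{t₀} = φ on [t₀, t₀+α]. -/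
open scoped ENNReal

noncomputable section

/-- 𝒟 = C([-h,0], [-B,∞)ⁿ). -/
def Dom (h : ℝ) (n : ℕ) (B : ℝ) : Set (Hist h n) := {φ | ∀ θ, ∀ i, -B ≤ φ θ i}

/-- The retraction ρ : 𝒞 → 𝒟, ρᵢ(φ)(θ) = r(φᵢ(θ)) with r(u) = max(u, -B). -/
def clampMap (h : ℝ) (n : ℕ) (B : ℝ) (φ : Hist h n) : Hist h n :=
  ⟨fun θ i => max (φ θ i) (-B), by
    refine continuous_pi fun i => ?_
    exact ((continuous_apply i).comp φ.continuous).max continuous_const⟩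

/-- The point 0 ∈ [-h, 0]. -/
def zeroPt (h : ℝ) (hh : 0 < h) : Set.Icc (-h) (0:ℝ) :=
  ⟨0, Set.mem_Icc.mpr ⟨by linarith, le_refl 0⟩⟩


/-- If `g` is continuous, `0 ≤ g a`, and `g` has a derivative at every point of
`[a,b]` which is nonnegative whenever `g ≤ 0` there, then `g ≥ 0` on `[a,b]`. -/
lemma key_nonneg (g : ℝ → ℝ) (hg : Continuous g) (a b : ℝ) (hga : 0 ≤ g a)
    (hd : ∀ s ∈ Set.Icc a b, ∃ d : ℝ, HasDerivAt g d s ∧ (g s ≤ 0 → 0 ≤ d)) :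
    ∀ s ∈ Set.Icc a b, 0 ≤ g s := by
  by_contra hcon
  push_neg at hcon
  obtain ⟨t₁, ht₁, hgt₁⟩ := hcon
  have hat₁ : a ≤ t₁ := ht₁.1
  -- zero set
  set S : Set ℝ := Set.Icc a t₁ ∩ g ⁻¹' {0} with hS
  have hSne : S.Nonempty := by
    have h0 : (0:ℝ) ∈ Set.Icc (g t₁) (g a) := ⟨le_of_lt hgt₁, hga⟩
    have := intermediate_value_Icc' hat₁ hg.continuousOn h0
    obtain ⟨c, hc, hgc⟩ := this
    exact ⟨c, hc, hgc⟩
  have hScl : IsClosed S := isClosed_Icc.inter (isClosed_singleton.preimage hg)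
  have hSbdd : BddAbove S := ⟨t₁, fun s hs => hs.1.2⟩
  set m := sSup S with hm
  have hmS : m ∈ S := (isCompact_Icc.inter_right (isClosed_singleton.preimage hg)).sSup_mem hSne
  have hma : a ≤ m := hmS.1.1
  have hmt₁ : m ≤ t₁ := hmS.1.2
  have hgm : g m = 0 := hmS.2
  -- g ≤ 0 on [m, t₁]
  have hle : ∀ s ∈ Set.Icc m t₁, g s ≤ 0 := by
    intro s hs
    by_contra hpos
    push_neg at hpos
    have hst₁ : s ≤ t₁ := hs.2
    have h0 : (0:ℝ) ∈ Set.Icc (g t₁) (g s) := ⟨le_of_lt hgt₁, le_of_lt hpos⟩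
    obtain ⟨c, hc, hgc⟩ := intermediate_value_Icc' hst₁ hg.continuousOn h0
    have hcS : c ∈ S := ⟨⟨le_trans hma (le_trans hs.1 hc.1), hc.2⟩, hgc⟩
    have : c ≤ m := le_csSup hSbdd hcS
    have hms : m < s := lt_of_le_of_ne hs.1 (by rintro rfl; exact absurd hgm (by linarith))
    linarith [hc.1]
  -- monotone on [m, t₁]
  have hmono : MonotoneOn g (Set.Icc m t₁) := by
    apply monotoneOn_of_deriv_nonneg (convex_Icc m t₁) hg.continuousOn
    · intro s hs
      rw [interior_Icc] at hs
      obtain ⟨d, hdd, -⟩ := hd s ⟨le_trans hma hs.1.le, le_trans hs.2.le ht₁.2⟩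
      exact hdd.differentiableAt.differentiableWithinAt
    · intro s hs
      rw [interior_Icc] at hs
      obtain ⟨d, hdd, hdn⟩ := hd s ⟨le_trans hma hs.1.le, le_trans hs.2.le ht₁.2⟩
      rw [hdd.deriv]
      exact hdn (hle s ⟨hs.1.le, hs.2.le⟩)
  have := hmono (Set.left_mem_Icc.mpr hmt₁) (Set.right_mem_Icc.mpr hmt₁) hmt₁
  rw [hgm] at this
  linarith

/-- Lemma 2.12. If f : 𝒟 → ℝⁿ satisfies the feedback condition (F) and
x is a solution of x'(t) = f(ρ(x_t)) through φ ∈ 𝒟 on [t₀-h, t₀+α], then all segments x_t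
stay in 𝒟, so ρ(x_t) = x_t and x solves x'(t) = f(x_t), x_{t₀} = φ, on [t₀, t₀+α]. -/
theorem statement4 (h : ℝ) (hh : 0 < h) (n : ℕ) (hn : 1 ≤ n) (B : ℝ)
    (f : Hist h n → Fin n → ℝ)
    (hFcond : ∀ φ ∈ Dom h n B, ∀ i : Fin n, φ (zeroPt h hh) i = -B → 0 ≤ f φ i)
    (t₀ α : ℝ) (hα : 0 < α) (φ : Hist h n) (hφ : φ ∈ Dom h n B)
    (x : C(ℝ, Fin n → ℝ))
    (hx : IsSolIcc Set.univ (fun ψ => f (clampMap h n B ψ)) t₀ α φ x) :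
    (∀ t ∈ Set.Icc t₀ (t₀ + α), seg (h := h) x t ∈ Dom h n B) ∧
    (∀ t ∈ Set.Icc t₀ (t₀ + α), clampMap h n B (seg x t) = seg x t) ∧
    IsSolIcc (Dom h n B) f t₀ α φ x := by
  -- componentwise lower bound on the forward interval
  have claim1 : ∀ s ∈ Set.Icc t₀ (t₀ + α), ∀ i : Fin n, -B ≤ x s i := by
    intro s hs i
    have hkey := key_nonneg (fun u => x u i + B)
      (((continuous_apply i).comp x.continuous).add continuous_const) t₀ (t₀ + α)
      ?_ ?_ s hs
    · linarith
    · -- initial condition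
      have h0 : (seg (h := h) x t₀) (zeroPt h hh) i = x t₀ i := by
        simp [seg, zeroPt]
      have := hφ (zeroPt h hh) i
      rw [← hx.1] at this
      rw [h0] at this
      linarith
    · intro u hu
      have hder := (hx.2 u hu).2
      have hcomp : HasDerivAt (fun v => x v i)
          (f (clampMap h n B (seg x u)) i) u :=
        ((ContinuousLinearMap.proj (R := ℝ) (φ := fun _ : Fin n => ℝ) i).hasFDerivAt.comp_hasDerivAt u hder)
      refine ⟨f (clampMap h n B (seg x u)) i, hcomp.add_const B, ?_⟩
      intro hle
      have hxu : x u i ≤ -B := by linarith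
      apply hFcond
      · intro θ j
        exact le_max_right _ _
      · show max ((seg (h := h) x u) (zeroPt h hh) i) (-B) = -B
        have : (seg (h := h) x u) (zeroPt h hh) i = x u i := by
          simp [seg, zeroPt]
        rw [this]
        exact max_eq_right hxu
  -- all segments stay in Dom
  have claim2 : ∀ t ∈ Set.Icc t₀ (t₀ + α), seg (h := h) x t ∈ Dom h n B := by
    intro t ht θ i
    show -B ≤ x (t + θ.1) i
    rcases le_total (t + θ.1) t₀ with hc | hc
    · -- history: use φ
      have hθ' : t + θ.1 - t₀ ∈ Set.Icc (-h) (0:ℝ) := by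
        constructor
        · have := θ.2.1; have := ht.1; simp only [Set.mem_Icc] at *; linarith
        · linarith
      have : (seg (h := h) x t₀) ⟨t + θ.1 - t₀, hθ'⟩ i = x (t + θ.1) i := by
        simp [seg]
      rw [← this, hx.1]
      exact hφ _ i
    · have hc2 : t + θ.1 ≤ t₀ + α := by
        have := θ.2.2; have := ht.2; linarith
      exact claim1 _ ⟨hc, hc2⟩ i
  have claim3 : ∀ t ∈ Set.Icc t₀ (t₀ + α), clampMap h n B (seg x t) = seg x t := by
    intro t ht
    ext θ i
    exact max_eq_left (claim2 t ht θ i)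
  refine ⟨claim2, claim3, hx.1, fun t ht => ⟨claim2 t ht, ?_⟩⟩
  have hd := (hx.2 t ht).2
  dsimp only at hd
  rwa [claim3 t ht] at hd
end
end

section
/- Suppose f : 𝒟 → ℝⁿ is almost locally Lipschitz, satisfies condition (F), f(U) is bounded whenever U ⊆ 𝒟 is bounded, and the set {x_t^φ : t ∈ [0,α)} is bounded whenever φ ∈ V_𝒟, α < ∞ and a solution x^φ is defined on [−h,α). Let φ ∈ V_𝒟, let x^φ : [−h,∞) → ℝⁿ be the (unique, global) solution of x'(t) = f(x_t), x₀ = φ, and suppose x^φ(t) → x* ∈ ℝⁿ as t → ∞. Then the constant function φ* ∈ 𝒞 with value x* belongs to 𝒟, and x* is an equilibrium: f(φ*) = 0 (equivalently, the constant function t ↦ x* on [−h,∞) is a solution of the DDE through φ*). -/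
open scoped ENNReal

noncomputable section

/-- Global solution of x'(t) = f(x_t) (t ≥ 0), x₀ = φ, on [-h, ∞). -/
def IsSolGlobal {h : ℝ} {n : ℕ} (𝒟 : Set (Hist h n)) (f : Hist h n → Fin n → ℝ)
    (φ : Hist h n) (x : C(ℝ, Fin n → ℝ)) : Prop :=
  seg x 0 = φ ∧ ∀ t : ℝ, 0 ≤ t →
    seg (h := h) x t ∈ 𝒟 ∧ HasDerivAt (fun s => x s) (f (seg x t)) t

/-!
The segments `x_t` converge uniformly to the constant history `φ*`, so `φ*` lies in the closed
set `𝒟`, and by continuity of `f` the derivative `x'(t) = f(x_t)` converges to `f(φ*)`. A function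
that converges at infinity while its derivative converges can only have derivative limit `0`
(mean value inequality on `[T, T + 1]`), hence `f(φ*) = 0`.
-/

open Filter Topology

theorem eq_zero_of_tendsto_of_hasDerivAt {E : Type*} [NormedAddCommGroup E] [NormedSpace ℝ E]
    {x x' : ℝ → E} {L v : E} (hderiv : ∀ᶠ t in atTop, HasDerivAt x (x' t) t)
    (hx : Tendsto x atTop (𝓝 L)) (hx' : Tendsto x' atTop (𝓝 v)) : v = 0 := by
  refine norm_le_zero_iff.1 (le_of_forall_pos_le_add fun ε hε => ?_)
  have hε3 : 0 < ε / 3 := by positivity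
  obtain ⟨T, hT⟩ := eventually_atTop.1 <| hderiv.and <|
    (hx.eventually (Metric.closedBall_mem_nhds L hε3)).and
      (hx'.eventually (Metric.closedBall_mem_nhds v hε3))
  have hdrift : ‖(x (T + 1) - (T + 1) • v) - (x T - T • v)‖ ≤ ε / 3 * (T + 1 - T) :=
    norm_image_sub_le_of_norm_deriv_le_segment' (f := fun t => x t - t • v)
      (f' := fun t => x' t - v)
      (fun t ht => ((hT t ht.1).1.sub ((hasDerivAt_id t).smul_const v)).hasDerivWithinAt.congr_deriv
        (by simp))
      (fun t ht => by simpa [dist_eq_norm] using (hT t ht.1).2.2) (T + 1) ⟨by linarith, le_rfl⟩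
  have hv : v = (x (T + 1) - L) - (x T - L) - ((x (T + 1) - (T + 1) • v) - (x T - T • v)) := by
    module
  have hT1 : ‖x (T + 1) - L‖ ≤ ε / 3 := by
    simpa [dist_eq_norm] using (hT (T + 1) (by linarith)).2.1
  have hT0 : ‖x T - L‖ ≤ ε / 3 := by simpa [dist_eq_norm] using (hT T le_rfl).2.1
  rw [hv]
  calc _ ≤ ‖x (T + 1) - L‖ + ‖x T - L‖ + ‖(x (T + 1) - (T + 1) • v) - (x T - T • v)‖ :=
        norm_sub_le_of_le (norm_sub_le _ _) le_rfl
    _ ≤ 0 + ε := by linarith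

section Histories

variable {h : ℝ} {n : ℕ}

theorem tendsto_seg_atTop {x : C(ℝ, Fin n → ℝ)} {L : Fin n → ℝ}
    (hx : Tendsto (fun t => x t) atTop (𝓝 L)) :
    Tendsto (fun t => seg (h := h) x t) atTop (𝓝 (ContinuousMap.const _ L)) := by
  refine Metric.tendsto_atTop.2 fun ε hε => ?_
  obtain ⟨N, hN⟩ := Metric.tendsto_atTop.1 hx (ε / 2) (half_pos hε)
  refine ⟨N + h, fun t ht => ?_⟩
  have hclose : dist (seg (h := h) x t) (ContinuousMap.const _ L) ≤ ε / 2 :=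
    (ContinuousMap.dist_le (half_pos hε).le).2 fun θ =>
      (hN (t + θ.1) (by linarith [θ.2.1])).le
  linarith

theorem seg_const (v : Fin n → ℝ) (t : ℝ) :
    seg (h := h) (ContinuousMap.const ℝ v) t = ContinuousMap.const _ v :=
  rfl

theorem isClosed_Dom (B : ℝ) : IsClosed (Dom h n B) := by
  simp only [Dom, Set.ofPred_forall]
  exact isClosed_iInter fun θ => isClosed_iInter fun i =>
    isClosed_le continuous_const ((continuous_apply i).comp (continuous_eval_const θ))

theorem isSolGlobal_const {𝒟 : Set (Hist h n)} {f : Hist h n → Fin n → ℝ} {v : Fin n → ℝ}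
    (hmem : ContinuousMap.const _ v ∈ 𝒟) (hzero : f (ContinuousMap.const _ v) = 0) :
    IsSolGlobal 𝒟 f (ContinuousMap.const _ v) (ContinuousMap.const ℝ v) := by
  refine ⟨seg_const v 0, fun t _ => ⟨hmem, ?_⟩⟩
  rw [seg_const, hzero]
  exact hasDerivAt_const t v

end Histories

theorem statement8_general (h : ℝ) (n : ℕ) (B : ℝ)
    (f : Hist h n → Fin n → ℝ) (hf : AlmostLocLip (Dom h n B) f)
    (φ : Hist h n)
    (x : C(ℝ, Fin n → ℝ)) (hx : IsSolGlobal (Dom h n B) f φ x)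
    (xstar : Fin n → ℝ)
    (hconv : Filter.Tendsto (fun t => x t) Filter.atTop (nhds xstar)) :
    (ContinuousMap.const (Set.Icc (-h) (0:ℝ)) xstar : Hist h n) ∈ Dom h n B ∧
    f (ContinuousMap.const (Set.Icc (-h) (0:ℝ)) xstar) = 0 ∧
    IsSolGlobal (Dom h n B) f (ContinuousMap.const (Set.Icc (-h) (0:ℝ)) xstar)
      (ContinuousMap.const ℝ xstar) := by
  have hseg := tendsto_seg_atTop (h := h) hconv
  have hseg_mem : ∀ᶠ t in atTop, seg (h := h) x t ∈ Dom h n B :=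
    eventually_atTop.2 ⟨0, fun t ht => (hx.2 t ht).1⟩
  have hmem := (isClosed_Dom B).mem_of_tendsto hseg hseg_mem
  have hzero : f (ContinuousMap.const _ xstar) = 0 :=
    eq_zero_of_tendsto_of_hasDerivAt (eventually_atTop.2 ⟨0, fun t ht => (hx.2 t ht).2⟩) hconv
      ((hf.1 _ hmem).tendsto.comp (tendsto_nhdsWithin_iff.2 ⟨hseg, hseg_mem⟩))
  exact ⟨hmem, hzero, isSolGlobal_const hmem hzero⟩

/-- Corollary 2.20. If the global solution x^φ converges to x* ∈ ℝⁿ as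
t → ∞, then the constant history φ* ≡ x* lies in 𝒟 and x* is an equilibrium: f(φ*) = 0,
equivalently the constant function is a solution through φ*. -/
theorem statement8 (h : ℝ) (hh : 0 < h) (n : ℕ) (hn : 1 ≤ n) (B : ℝ)
    (f : Hist h n → Fin n → ℝ) (hf : AlmostLocLip (Dom h n B) f)
    (hFcond : ∀ φ ∈ Dom h n B, ∀ i : Fin n, φ (zeroPt h hh) i = -B → 0 ≤ f φ i)
    (hbdd : ∀ U ⊆ Dom h n B, Bornology.IsBounded U → Bornology.IsBounded (f '' U))
    (hsegbdd : ∀ φ ∈ Dom h n B, LipFin φ → ∀ (α : ℝ) (x : C(ℝ, Fin n → ℝ)),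
      IsSolIco (Dom h n B) f 0 (ENNReal.ofReal α) φ x →
      Bornology.IsBounded (seg (h := h) x '' Set.Ico 0 α))
    (φ : Hist h n) (hφD : φ ∈ Dom h n B) (hφlip : LipFin φ)
    (x : C(ℝ, Fin n → ℝ)) (hx : IsSolGlobal (Dom h n B) f φ x)
    (xstar : Fin n → ℝ)
    (hconv : Filter.Tendsto (fun t => x t) Filter.atTop (nhds xstar)) :
    (ContinuousMap.const (Set.Icc (-h) (0:ℝ)) xstar : Hist h n) ∈ Dom h n B ∧
    f (ContinuousMap.const (Set.Icc (-h) (0:ℝ)) xstar) = 0 ∧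
    IsSolGlobal (Dom h n B) f (ContinuousMap.const (Set.Icc (-h) (0:ℝ)) xstar)
      (ContinuousMap.const ℝ xstar) :=
  statement8_general h n B f hf φ x hx xstar hconv
end
end

section
/- Assume in addition that |q(z)| ≤ q̄ for all z ∈ ℝ₊. Let (w,v) be a solution of the system through (φ,ψ) ∈ 𝒟 on [−h,∞), and let A, R, T > 0 satisfy q̄ A e^{q̄ T} ≤ R. If ‖φ‖ ≤ A and lip φ ≤ R, then lip w_t ≤ R for all t ∈ [0,T] (equivalently, w is R-Lipschitz on [t−h, t] for each t ∈ [0,T]). -/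
open scoped ENNReal

noncomputable section

/-- C([-h,0], ℝ) with the sup-norm. -/
abbrev HistR (h : ℝ) : Type := C(Set.Icc (-h) (0:ℝ), ℝ)

/-- The segment x_t of a continuous x : ℝ → ℝ. -/
def segR {h : ℝ} (x : C(ℝ, ℝ)) (t : ℝ) : HistR h :=
  ⟨fun θ => x (t + θ.1), x.continuous.comp (continuous_const.add continuous_subtype_val)⟩

/-- `lip χ ≤ R`. -/
def LipBddR {h : ℝ} (R : ℝ) (χ : HistR h) : Prop :=
  ∀ s t : Set.Icc (-h) (0:ℝ), |χ s - χ t| ≤ R * |s.1 - t.1|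

/-- (w, v) is a solution of w'(t) = q(v(t))w(t), v'(t) = -μ v(t) + j(w_t, v_t) (t > 0)
through (φ, ψ) ∈ 𝒟 = C([-h,0], ℝ₊²) on [-h, ∞). -/
def IsSolSys (h μ : ℝ) (q : ℝ → ℝ) (j : HistR h → HistR h → ℝ)
    (φ ψ : HistR h) (w v : C(ℝ, ℝ)) : Prop :=
  (∀ t : ℝ, -h ≤ t → 0 ≤ w t ∧ 0 ≤ v t) ∧
  segR w 0 = φ ∧ segR v 0 = ψ ∧
  ∀ t : ℝ, 0 < t →
    HasDerivAt (fun s => w s) (q (v t) * w t) t ∧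
    HasDerivAt (fun s => v s) (-μ * v t + j (segR w t) (segR v t)) t

/-- The functions f_l and f_τ of Theorem 3.1 (c). -/
def fl (μ qb kj : ℝ) (t : ℝ) : ℝ :=
  kj / (μ + qb) * (Real.exp (qb * t) - Real.exp (-μ * t))

def ftau (μ qb kj τ : ℝ) (t : ℝ) : ℝ :=
  if t ≤ τ then kj / μ * (1 - Real.exp (-μ * t))
  else kj * (qb * (Real.exp (-μ * (t - τ)) - Real.exp (-μ * t)) +
      μ * (Real.exp (qb * (t - τ)) - Real.exp (-μ * t))) / (μ * (μ + qb))

/-- q_e(t) = 1 for t ≤ 0 and e^{q̄ t} for t > 0. -/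
def qe (qb : ℝ) (t : ℝ) : ℝ := if t ≤ 0 then 1 else Real.exp (qb * t)

/-- Theorem 3.1 (b). If |q| ≤ q̄ on ℝ₊ and q̄ A e^{q̄ T} ≤ R, then for a
solution (w,v) through (φ,ψ) with ‖φ‖ ≤ A and lip φ ≤ R one has lip w_t ≤ R for all
t ∈ [0,T]. -/
theorem statement9 (h : ℝ) (hh : 0 < h) (μ : ℝ) (hμ : 0 < μ)
    (q : ℝ → ℝ) (qbar : ℝ) (hq : ∀ z : ℝ, 0 ≤ z → q z ≤ qbar)
    (hqabs : ∀ z : ℝ, 0 ≤ z → |q z| ≤ qbar)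
    (j : HistR h → HistR h → ℝ) (hj : Continuous j.uncurry)
    (hjpos : ∀ φ' ψ' : HistR h, (∀ θ, 0 ≤ φ' θ) → (∀ θ, 0 ≤ ψ' θ) → 0 ≤ j φ' ψ')
    (φ ψ : HistR h) (w v : C(ℝ, ℝ)) (hsol : IsSolSys h μ q j φ ψ w v)
    (A R T : ℝ) (hA : 0 < A) (hR : 0 < R) (hT : 0 < T)
    (hqAR : qbar * A * Real.exp (qbar * T) ≤ R)
    (hφA : ‖φ‖ ≤ A) (hφR : LipBddR R φ) :
    ∀ t ∈ Set.Icc (0:ℝ) T, LipBddR R (segR (h := h) w t) := by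

  obtain ⟨hnn, hw0, hv0, hder⟩ := hsol
  have hqb0 : 0 ≤ qbar := le_trans (abs_nonneg _) (hqabs 0 le_rfl)
  have h0mem : (0:ℝ) ∈ Set.Icc (-h) (0:ℝ) := ⟨by linarith, le_rfl⟩
  have hw0A : w 0 ≤ A := by
    have he : w 0 = φ ⟨0, h0mem⟩ := by rw [← hw0]; simp [segR]
    rw [he]
    calc φ ⟨0, h0mem⟩ ≤ |φ ⟨0, h0mem⟩| := le_abs_self _
      _ = ‖φ ⟨0, h0mem⟩‖ := (Real.norm_eq_abs _).symm
      _ ≤ ‖φ‖ := φ.norm_coe_le_norm _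
      _ ≤ A := hφA
  -- Gronwall bound
  have hgr : ∀ τ : ℝ, 0 ≤ τ → w τ ≤ A * Real.exp (qbar * τ) := by
    set g : ℝ → ℝ := fun τ => w τ * Real.exp (-qbar * τ) with hg
    have hdAt : ∀ x : ℝ, 0 < x →
        HasDerivAt g ((q (v x) - qbar) * (w x * Real.exp (-qbar * x))) x := by
      intro x hx
      have h1 := (hder x hx).1
      have h2 : HasDerivAt (fun τ => Real.exp (-qbar * τ))
          (-qbar * Real.exp (-qbar * x)) x := by
        simpa [Function.comp_def, neg_mul, mul_comm] using
          (Real.hasDerivAt_exp (-qbar * x)).comp x ((hasDerivAt_id x).const_mul (-qbar))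
      have h3 := h1.mul h2
      refine h3.congr_deriv ?_
      ring
    have hanti : AntitoneOn g (Set.Ici 0) := by
      apply antitoneOn_of_deriv_nonpos (convex_Ici 0)
      · exact (w.continuous.mul
          (Real.continuous_exp.comp (continuous_const.mul continuous_id))).continuousOn
      · intro x hx
        rw [interior_Ici] at hx
        exact ((hdAt x hx).differentiableAt.differentiableWithinAt)
      · intro x hx
        rw [interior_Ici] at hx
        have hx' : 0 < x := hx
        rw [(hdAt x hx).deriv]
        have hvx : 0 ≤ v x := (hnn x (by linarith)).2 -- uses hx'
        have hwx : 0 ≤ w x := (hnn x (by linarith)).1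
        have hq1 := hq (v x) hvx
        exact mul_nonpos_of_nonpos_of_nonneg (by linarith)
          (mul_nonneg hwx (Real.exp_pos _).le)
    intro τ hτ
    have key : g τ ≤ g 0 := hanti Set.self_mem_Ici hτ hτ
    have key2 : w τ * Real.exp (-qbar * τ) ≤ w 0 := by simpa [hg] using key
    have h4 : w τ ≤ w 0 * Real.exp (qbar * τ) := by
      have h5 := mul_le_mul_of_nonneg_right key2 (Real.exp_pos (qbar * τ)).le
      rwa [mul_assoc, ← Real.exp_add, neg_mul, neg_add_cancel, Real.exp_zero, mul_one] at h5
    exact h4.trans (mul_le_mul_of_nonneg_right hw0A (Real.exp_pos _).le)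
  -- derivative bound
  have hderbd : ∀ τ : ℝ, 0 < τ → τ ≤ T → |q (v τ) * w τ| ≤ R := by
    intro τ h1 h2
    have hwτ : 0 ≤ w τ := (hnn τ (by linarith)).1
    have hvτ : 0 ≤ v τ := (hnn τ (by linarith)).2
    rw [abs_mul, abs_of_nonneg hwτ]
    calc |q (v τ)| * w τ ≤ qbar * (A * Real.exp (qbar * τ)) :=
        mul_le_mul (hqabs _ hvτ) (hgr τ h1.le) hwτ hqb0
      _ ≤ qbar * (A * Real.exp (qbar * T)) := by
        have he := Real.exp_le_exp.2 (mul_le_mul_of_nonneg_left h2 hqb0)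
        exact mul_le_mul_of_nonneg_left (mul_le_mul_of_nonneg_left he hA.le) hqb0
      _ ≤ R := by rw [← mul_assoc] at *; linarith [hqAR]
  -- Lipschitz on (0, T]
  have hlipPos : ∀ a b : ℝ, 0 < a → a ≤ b → b ≤ T → |w b - w a| ≤ R * (b - a) := by
    intro a b ha hab hbT
    have key := Convex.norm_image_sub_le_of_norm_hasDerivWithin_le
      (f := fun s => w s) (f' := fun s => q (v s) * w s) (s := Set.Icc a b) (C := R)
      (fun x hx => ((hder x (lt_of_lt_of_le ha hx.1)).1).hasDerivWithinAt)
      (fun x hx => by rw [Real.norm_eq_abs]; exact hderbd x (lt_of_lt_of_le ha hx.1) (hx.2.trans hbT))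
      (convex_Icc a b) ⟨le_rfl, hab⟩ ⟨hab, le_rfl⟩
    rw [Real.norm_eq_abs, Real.norm_eq_abs, abs_of_nonneg (by linarith : (0:ℝ) ≤ b - a)] at key
    exact key
  -- Lipschitz on [0, T]
  have hlip0T : ∀ a b : ℝ, 0 ≤ a → a ≤ b → b ≤ T → |w b - w a| ≤ R * (b - a) := by
    intro a b ha hab hbT
    rcases ha.lt_or_eq with h1 | h1
    · exact hlipPos a b h1 hab hbT
    · rcases hab.lt_or_eq with hb | hb
      · -- a = 0 < b
        subst h1
        have hb' : (0:ℝ) < b := hb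
        have htends : Filter.Tendsto (fun x => R * (b - x) - |w b - w x|) (nhdsWithin 0 (Set.Ioi 0))
            (nhds (R * (b - 0) - |w b - w 0|)) := by
          apply Filter.Tendsto.mono_left _ nhdsWithin_le_nhds
          exact ((continuous_const.mul (continuous_const.sub continuous_id)).sub
            ((continuous_const.sub w.continuous).abs)).tendsto 0
        have hev : ∀ᶠ x in nhdsWithin (0:ℝ) (Set.Ioi 0),
            0 ≤ R * (b - x) - |w b - w x| := by
          filter_upwards [Ioo_mem_nhdsGT_of_mem ⟨le_rfl, hb'⟩] with x hx
          have := hlipPos x b hx.1 hx.2.le hbT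
          linarith
        have hfin := ge_of_tendsto htends hev
        have : |w b - w 0| ≤ R * (b - 0) := by linarith
        simpa using this
      · subst hb
        simp [mul_comm]
  -- past segment via φ
  have hpast : ∀ a b : ℝ, -h ≤ a → a ≤ b → b ≤ 0 → |w b - w a| ≤ R * (b - a) := by
    intro a b ha hab hb
    have hwa : w a = φ ⟨a, ⟨ha, hab.trans hb⟩⟩ := by rw [← hw0]; simp [segR]
    have hwb : w b = φ ⟨b, ⟨ha.trans hab, hb⟩⟩ := by rw [← hw0]; simp [segR]
    rw [hwa, hwb]
    have := hφR ⟨b, ⟨ha.trans hab, hb⟩⟩ ⟨a, ⟨ha, hab.trans hb⟩⟩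
    simpa [abs_of_nonneg (by linarith : (0:ℝ) ≤ b - a)] using this
  -- master
  have master : ∀ a b : ℝ, -h ≤ a → a ≤ b → b ≤ T → |w b - w a| ≤ R * (b - a) := by
    intro a b ha hab hbT
    rcases le_or_gt b 0 with hb | hb
    · exact hpast a b ha hab hb
    · rcases le_or_gt 0 a with ha0 | ha0
      · exact hlip0T a b ha0 hab hbT
      · have h1 := hpast a 0 ha ha0.le le_rfl
        have h2 := hlip0T 0 b le_rfl hb.le hbT
        calc |w b - w a| ≤ |w b - w 0| + |w 0 - w a| := abs_sub_le _ _ _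
          _ ≤ R * (b - 0) + R * (0 - a) := add_le_add h2 h1
          _ = R * (b - a) := by ring
  intro t ht s s'
  simp only [segR, ContinuousMap.coe_mk]
  rcases le_total s'.1 s.1 with hss | hss
  · have hm := master (t + s'.1) (t + s.1) (by linarith [ht.1, s'.2.1]) (by linarith)
      (by linarith [ht.2, s.2.2])
    rw [abs_of_nonneg (by linarith : (0:ℝ) ≤ s.1 - s'.1)]
    have : t + s.1 - (t + s'.1) = s.1 - s'.1 := by ring
    rw [this] at hm
    exact hm
  · have hm := master (t + s.1) (t + s'.1) (by linarith [ht.1, s.2.1]) (by linarith)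
      (by linarith [ht.2, s'.2.2])
    rw [abs_sub_comm, abs_sub_comm s.1 s'.1, abs_of_nonneg (by linarith : (0:ℝ) ≤ s'.1 - s.1)]
    have : t + s'.1 - (t + s.1) = s'.1 - s.1 := by ring
    rw [this] at hm
    exact hm
end
end

section
/- Let μ > 0, q̄ > 0, k_j > 0, τ̲ > 0. The function f_τ satisfies: f_τ(0) = 0, f_τ is continuous on [0,∞), differentiable on [0,τ̲) ∪ (τ̲,∞), (strictly) increasing, and f_τ(t) → ∞ as t → ∞. The function t ↦ f_τ(t)/(1 − e^{−μ t}) equals the constant k_j/μ on (0,τ̲] and is (strictly) increasing to ∞ on [τ̲,∞). Moreover f_l(t) > f_τ(t) for all t > 0. -/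
open scoped ENNReal

noncomputable section

section aux

variable (μ qb kj τ : ℝ)

/-- first branch -/
def ftA (t : ℝ) : ℝ := kj / μ * (1 - Real.exp (-μ * t))

/-- second branch -/
def ftB (t : ℝ) : ℝ :=
  kj * (qb * (Real.exp (-μ * (t - τ)) - Real.exp (-μ * t)) +
      μ * (Real.exp (qb * (t - τ)) - Real.exp (-μ * t))) / (μ * (μ + qb))

/-- derivative of second branch -/
def ftB' (t : ℝ) : ℝ :=
  kj * (qb * (Real.exp (-μ * t) * μ - Real.exp (-μ * (t - τ)) * μ) +
      μ * (Real.exp (qb * (t - τ)) * qb + Real.exp (-μ * t) * μ)) / (μ * (μ + qb))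

lemma hasDerivAt_ftB (t : ℝ) : HasDerivAt (ftB μ qb kj τ) (ftB' μ qb kj τ t) t := by
  have h1 : HasDerivAt (fun t : ℝ => Real.exp (-μ * (t - τ)))
      (Real.exp (-μ * (t - τ)) * (-μ)) t := by
    have := (((hasDerivAt_id t).sub_const τ).const_mul (-μ)).exp
    simpa using this
  have h2 : HasDerivAt (fun t : ℝ => Real.exp (-μ * t)) (Real.exp (-μ * t) * (-μ)) t := by
    have := ((hasDerivAt_id t).const_mul (-μ)).exp
    simpa using this
  have h3 : HasDerivAt (fun t : ℝ => Real.exp (qb * (t - τ)))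
      (Real.exp (qb * (t - τ)) * qb) t := by
    have := (((hasDerivAt_id t).sub_const τ).const_mul qb).exp
    simpa using this
  have := ((((h1.sub h2).const_mul qb).add ((h3.sub h2).const_mul μ)).const_mul kj).div_const
    (μ * (μ + qb))
  exact this.congr_deriv (by unfold ftB'; ring)

lemma hasDerivAt_D (μ : ℝ) (t : ℝ) :
    HasDerivAt (fun t : ℝ => 1 - Real.exp (-μ * t)) (Real.exp (-μ * t) * μ) t := by
  have h2 : HasDerivAt (fun t : ℝ => Real.exp (-μ * t)) (Real.exp (-μ * t) * (-μ)) t := by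
    have := ((hasDerivAt_id t).const_mul (-μ)).exp
    simpa using this
  have := (hasDerivAt_const t (1:ℝ)).sub h2
  exact this.congr_deriv (by ring)

lemma exp_convex (hμ : 0 < μ) (hqb : 0 < qb) (s : ℝ) :
    (μ + qb) * Real.exp ((qb - μ) * s) ≤ qb * Real.exp (qb * s) + μ * Real.exp (-μ * s) := by
  have hs : (0:ℝ) < qb + μ := by linarith
  have hsum : qb / (qb + μ) + μ / (qb + μ) = 1 := by field_simp
  have h := convexOn_exp.2 (Set.mem_univ (qb * s)) (Set.mem_univ (-μ * s))
      (le_of_lt (div_pos hqb hs)) (le_of_lt (div_pos hμ hs)) hsum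
  simp only [smul_eq_mul] at h
  have harg : qb / (qb + μ) * (qb * s) + μ / (qb + μ) * (-μ * s) = (qb - μ) * s := by
    field_simp; ring
  rw [harg] at h
  have := mul_le_mul_of_nonneg_left h (le_of_lt hs)
  calc (μ + qb) * Real.exp ((qb - μ) * s) = (qb + μ) * Real.exp ((qb - μ) * s) := by ring
    _ ≤ (qb + μ) * (qb / (qb + μ) * Real.exp (qb * s) + μ / (qb + μ) * Real.exp (-μ * s)) := this
    _ = qb * Real.exp (qb * s) + μ * Real.exp (-μ * s) := by field_simp

end aux

set_option maxHeartbeats 1000000 in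
/-- part of Theorem 3.1 (c) for f_τ. f_τ(0) = 0, f_τ is continuous on
[0,∞), differentiable on [0,τ̲) ∪ (τ̲,∞), strictly increasing and tends to ∞;
t ↦ f_τ(t)/(1-e^{-μt}) equals k_j/μ on (0,τ̲] and strictly increases to ∞ on [τ̲,∞);
moreover f_l > f_τ on (0,∞). -/
theorem statement11 (μ qb kj τ : ℝ) (hμ : 0 < μ) (hqb : 0 < qb) (hkj : 0 < kj)
    (hτ : 0 < τ) :
    ftau μ qb kj τ 0 = 0 ∧
    ContinuousOn (ftau μ qb kj τ) (Set.Ici 0) ∧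
    DifferentiableOn ℝ (ftau μ qb kj τ) (Set.Ico 0 τ ∪ Set.Ioi τ) ∧
    StrictMonoOn (ftau μ qb kj τ) (Set.Ici 0) ∧
    Filter.Tendsto (ftau μ qb kj τ) Filter.atTop Filter.atTop ∧
    (∀ t ∈ Set.Ioc (0:ℝ) τ, ftau μ qb kj τ t / (1 - Real.exp (-μ * t)) = kj / μ) ∧
    StrictMonoOn (fun t => ftau μ qb kj τ t / (1 - Real.exp (-μ * t))) (Set.Ici τ) ∧
    Filter.Tendsto (fun t => ftau μ qb kj τ t / (1 - Real.exp (-μ * t)))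
      Filter.atTop Filter.atTop ∧
    (∀ t : ℝ, 0 < t → ftau μ qb kj τ t < fl μ qb kj t) := by
  have hμqb : (0:ℝ) < μ + qb := by linarith
  have hμμqb : (0:ℝ) < μ * (μ + qb) := by positivity
  -- branch equalities
  have eqA : ∀ t : ℝ, t ≤ τ → ftau μ qb kj τ t = ftA μ kj t := fun t ht => by
    simp [ftau, ftA, ht]
  have hABτ : ftA μ kj τ = ftB μ qb kj τ τ := by
    unfold ftA ftB
    simp only [sub_self, mul_zero, Real.exp_zero]
    field_simp
    ring
  have eqB : ∀ t : ℝ, τ ≤ t → ftau μ qb kj τ t = ftB μ qb kj τ t := by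
    intro t ht
    rcases eq_or_lt_of_le ht with h | h
    · rw [← h, eqA τ le_rfl, hABτ]
    · simp [ftau, ftB, not_le.2 h]
  -- continuity
  have contA : Continuous (ftA μ kj) := by unfold ftA; fun_prop
  have contB : Continuous (ftB μ qb kj τ) := by unfold ftB; fun_prop
  have hcont : Continuous (ftau μ qb kj τ) := by
    have : (ftau μ qb kj τ) = fun t => if t ≤ τ then ftA μ kj t else ftB μ qb kj τ t := by
      funext t; by_cases h : t ≤ τ <;> simp [ftau, ftA, ftB, h]
    rw [this]
    exact contA.if_le contB continuous_id continuous_const fun x hx => by rw [hx]; exact hABτ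
  -- e^{-μt} facts
  have hexplt1 : ∀ t : ℝ, 0 < t → Real.exp (-μ * t) < 1 := by
    intro t ht
    rw [← Real.exp_zero]
    exact Real.exp_lt_exp.2 (by nlinarith)
  -- strict monotonicity of ftau
  have hAmono : StrictMono (ftA μ kj) := by
    intro a b hab
    unfold ftA
    have : Real.exp (-μ * b) < Real.exp (-μ * a) := Real.exp_lt_exp.2 (by nlinarith)
    have hc : (0:ℝ) < kj / μ := by positivity
    nlinarith
  have hB'pos : ∀ t : ℝ, τ < t → 0 < ftB' μ qb kj τ t := by
    intro t ht
    unfold ftB'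
    apply div_pos _ hμμqb
    have h1 : Real.exp (-μ * (t - τ)) < 1 := hexplt1 _ (by linarith)
    have h2 : 1 < Real.exp (qb * (t - τ)) := by
      rw [← Real.exp_zero]; exact Real.exp_lt_exp.2 (by nlinarith)
    have h3 : 0 < Real.exp (-μ * t) := Real.exp_pos _
    apply mul_pos hkj
    nlinarith [mul_pos hqb hμ, mul_pos (mul_pos hqb hμ) h3, mul_pos hμ h3]
  have hBmono : StrictMonoOn (ftB μ qb kj τ) (Set.Ici τ) := by
    apply strictMonoOn_of_deriv_pos (convex_Ici τ) contB.continuousOn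
    intro x hx
    rw [interior_Ici] at hx
    rw [(hasDerivAt_ftB μ qb kj τ x).deriv]
    exact hB'pos x hx
  have hmono : StrictMonoOn (ftau μ qb kj τ) (Set.Ici 0) := by
    intro x hx y hy hxy
    rcases le_or_gt y τ with h | h
    · rw [eqA x (le_of_lt (lt_of_lt_of_le hxy h)), eqA y h]
      exact hAmono hxy
    · rcases le_or_gt τ x with h' | h'
      · rw [eqB x h', eqB y (le_of_lt h)]
        exact hBmono h' (le_of_lt h) hxy
      · calc ftau μ qb kj τ x < ftau μ qb kj τ τ := by
              rw [eqA x (le_of_lt h'), eqA τ le_rfl]; exact hAmono h'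
          _ < ftau μ qb kj τ y := by
              rw [eqB τ le_rfl, eqB y (le_of_lt h)]
              exact hBmono Set.self_mem_Ici (Set.mem_Ici.2 (le_of_lt h)) h
  -- differentiability
  have hdiff : DifferentiableOn ℝ (ftau μ qb kj τ) (Set.Ico 0 τ ∪ Set.Ioi τ) := by
    intro x hx
    rcases hx with hx | hx
    · have heq : ftau μ qb kj τ =ᶠ[nhds x] ftA μ kj :=
        Filter.eventuallyEq_of_mem (Iio_mem_nhds hx.2) fun y hy => eqA y (le_of_lt hy)
      have : DifferentiableAt ℝ (ftA μ kj) x := by unfold ftA; fun_prop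
      exact (this.congr_of_eventuallyEq heq).differentiableWithinAt
    · have heq : ftau μ qb kj τ =ᶠ[nhds x] ftB μ qb kj τ :=
        Filter.eventuallyEq_of_mem (Ioi_mem_nhds hx) fun y hy => eqB y (le_of_lt hy)
      have : DifferentiableAt ℝ (ftB μ qb kj τ) x := (hasDerivAt_ftB μ qb kj τ x).differentiableAt
      exact (this.congr_of_eventuallyEq heq).differentiableWithinAt
  -- tendsto of ftau
  have hsubtop : Filter.Tendsto (fun t : ℝ => t - τ) Filter.atTop Filter.atTop := by
    simpa [sub_eq_add_neg] using
      Filter.tendsto_atTop_add_const_right Filter.atTop (-τ) Filter.tendsto_id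
  have hE3top : Filter.Tendsto (fun t : ℝ => Real.exp (qb * (t - τ))) Filter.atTop Filter.atTop :=
    Real.tendsto_exp_atTop.comp (hsubtop.const_mul_atTop hqb)
  have hE1zero : Filter.Tendsto (fun t : ℝ => Real.exp (-μ * (t - τ))) Filter.atTop (nhds 0) :=
    Real.tendsto_exp_atBot.comp (hsubtop.const_mul_atTop_of_neg (by linarith))
  have hE2zero : Filter.Tendsto (fun t : ℝ => Real.exp (-μ * t)) Filter.atTop (nhds 0) :=
    Real.tendsto_exp_atBot.comp (Filter.tendsto_id.const_mul_atTop_of_neg (by linarith))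
  have hBtop : Filter.Tendsto (ftB μ qb kj τ) Filter.atTop Filter.atTop := by
    have hrw : ftB μ qb kj τ = fun t =>
        (kj * (qb * (Real.exp (-μ * (t - τ)) - Real.exp (-μ * t)) -
          μ * Real.exp (-μ * t)) / (μ * (μ + qb))) +
        (kj / (μ + qb)) * Real.exp (qb * (t - τ)) := by
      funext t; unfold ftB; field_simp; ring
    rw [hrw]
    apply Filter.Tendsto.add_atTop (C := kj * (qb * (0 - 0) - μ * 0) / (μ * (μ + qb)))
    · apply Filter.Tendsto.div_const
      apply Filter.Tendsto.const_mul
      exact ((hE1zero.sub hE2zero).const_mul qb).sub (hE2zero.const_mul μ)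
    · exact hE3top.const_mul_atTop (by positivity)
  have heventB : ftau μ qb kj τ =ᶠ[Filter.atTop] ftB μ qb kj τ :=
    Filter.eventually_atTop.2 ⟨τ, fun t ht => eqB t ht⟩
  have htop : Filter.Tendsto (ftau μ qb kj τ) Filter.atTop Filter.atTop :=
    hBtop.congr' heventB.symm
  -- quotient on (0, τ]
  have hquot : ∀ t ∈ Set.Ioc (0:ℝ) τ, ftau μ qb kj τ t / (1 - Real.exp (-μ * t)) = kj / μ := by
    intro t ht
    rw [eqA t ht.2]
    unfold ftA
    have hne : 1 - Real.exp (-μ * t) ≠ 0 := by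
      have := hexplt1 t ht.1; intro h; linarith
    rw [mul_div_assoc, div_self hne, mul_one]
  -- quotient strict mono on [τ, ∞)
  have hG : ∀ t : ℝ, 0 < t → HasDerivAt
      (fun t => ftB μ qb kj τ t / (1 - Real.exp (-μ * t)))
      ((ftB' μ qb kj τ t * (1 - Real.exp (-μ * t)) -
        ftB μ qb kj τ t * (Real.exp (-μ * t) * μ)) / (1 - Real.exp (-μ * t))^2) t := by
    intro t ht
    exact (hasDerivAt_ftB μ qb kj τ t).div (hasDerivAt_D μ t)
      (by have := hexplt1 t ht; intro h; linarith [h])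
  have hnumpos : ∀ t : ℝ, τ < t →
      0 < ftB' μ qb kj τ t * (1 - Real.exp (-μ * t)) -
        ftB μ qb kj τ t * (Real.exp (-μ * t) * μ) := by
    intro t ht
    obtain ⟨E1, hE1⟩ : ∃ x, Real.exp (-μ * (t - τ)) = x := ⟨_, rfl⟩
    obtain ⟨E3, hE3⟩ : ∃ x, Real.exp (qb * (t - τ)) = x := ⟨_, rfl⟩
    obtain ⟨p, hp⟩ : ∃ x, Real.exp (-μ * τ) = x := ⟨_, rfl⟩
    have hE2 : Real.exp (-μ * t) = E1 * p := by
      rw [← hE1, ← hp, ← Real.exp_add]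
      congr 1
      ring
    have hconv : (μ + qb) * (E3 * E1) ≤ qb * E3 + μ * E1 := by
      have h := exp_convex μ qb hμ hqb (t - τ)
      have harg : Real.exp ((qb - μ) * (t - τ)) = E3 * E1 := by
        rw [← hE1, ← hE3, ← Real.exp_add]
        congr 1
        ring
      rw [harg, hE1, hE3] at h
      exact h
    have hE3gt : 1 < E3 := by
      rw [← hE3, ← Real.exp_zero]
      exact Real.exp_lt_exp.2 (by nlinarith)
    have hE1pos : 0 < E1 := by rw [← hE1]; exact Real.exp_pos _
    have hppos : 0 < p := by rw [← hp]; exact Real.exp_pos _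
    have hplt : p < 1 := by rw [← hp]; exact hexplt1 _ hτ
    have hkey : ftB' μ qb kj τ t * (1 - Real.exp (-μ * t)) -
        ftB μ qb kj τ t * (Real.exp (-μ * t) * μ) =
        (kj * μ * (qb * (E3 - E1) - (qb + μ) * (p * E1) * (E3 - 1))) / (μ * (μ + qb)) := by
      unfold ftB ftB'
      rw [hE2, hE1, hE3]
      field_simp
      ring
    rw [hkey]
    apply div_pos _ hμμqb
    have h2 : 0 < (μ + qb) * (E1 * (E3 - 1)) * (1 - p) := by
      apply mul_pos (mul_pos hμqb _) (by linarith)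
      exact mul_pos hE1pos (by linarith)
    have hinner : 0 < qb * (E3 - E1) - (qb + μ) * (p * E1) * (E3 - 1) := by
      linarith [h2, hconv]
    exact mul_pos (mul_pos hkj hμ) hinner
  have hGmono : StrictMonoOn (fun t => ftau μ qb kj τ t / (1 - Real.exp (-μ * t)))
      (Set.Ici τ) := by
    have hBG : StrictMonoOn (fun t => ftB μ qb kj τ t / (1 - Real.exp (-μ * t)))
        (Set.Ici τ) := by
      apply strictMonoOn_of_deriv_pos (convex_Ici τ)
      · apply ContinuousOn.div contB.continuousOn
        · fun_prop
        · intro x hx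
          have := hexplt1 x (lt_of_lt_of_le hτ hx)
          intro h; linarith
      · intro x hx
        rw [interior_Ici] at hx
        rw [(hG x (lt_trans hτ hx)).deriv]
        have hlt := hexplt1 x (lt_trans hτ hx)
        exact div_pos (hnumpos x hx) (pow_pos (by linarith) 2)
    intro x hx y hy hxy
    simp only
    rw [eqB x hx, eqB y hy]
    exact hBG hx hy hxy
  -- tendsto of quotient
  have hGtop : Filter.Tendsto (fun t => ftau μ qb kj τ t / (1 - Real.exp (-μ * t)))
      Filter.atTop Filter.atTop := by
    have hDinv : Filter.Tendsto (fun t : ℝ => (1 - Real.exp (-μ * t))⁻¹)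
        Filter.atTop (nhds 1) := by
      have h1 : Filter.Tendsto (fun t : ℝ => 1 - Real.exp (-μ * t)) Filter.atTop (nhds 1) := by
        have := (tendsto_const_nhds (α := ℝ) (x := (1:ℝ)) (f := Filter.atTop)).sub hE2zero
        simpa using this
      have := h1.inv₀ (by norm_num)
      simpa using this
    have : Filter.Tendsto (fun t => ftau μ qb kj τ t * (1 - Real.exp (-μ * t))⁻¹)
        Filter.atTop Filter.atTop := htop.atTop_mul_pos (by norm_num) hDinv
    simpa [div_eq_mul_inv] using this
  -- fl > ftau
  have hfl : ∀ t : ℝ, 0 < t → ftau μ qb kj τ t < fl μ qb kj t := by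
    intro t ht
    have hX : qb * t + 1 < Real.exp (qb * t) :=
      Real.add_one_lt_exp (ne_of_gt (mul_pos hqb ht))
    have hE2gt : -μ * t + 1 < Real.exp (-μ * t) :=
      Real.add_one_lt_exp (by nlinarith)
    have hE2pos : (0:ℝ) < Real.exp (-μ * t) := Real.exp_pos _
    have hE2lt : Real.exp (-μ * t) < 1 := hexplt1 t ht
    rcases le_or_gt t τ with h | h
    · rw [eqA t h]
      unfold ftA fl
      rw [div_mul_eq_mul_div, div_mul_eq_mul_div, div_lt_div_iff₀ hμ hμqb]
      have f1 : μ * (qb * t + 1) < μ * Real.exp (qb * t) := mul_lt_mul_of_pos_left hX hμ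
      have f2 : qb * (1 - Real.exp (-μ * t)) < qb * (μ * t) :=
        mul_lt_mul_of_pos_left (by linarith) hqb
      have hinner : (1 - Real.exp (-μ * t)) * (μ + qb) < (Real.exp (qb * t) - Real.exp (-μ * t)) * μ := by
        linarith [f1, f2]
      linarith [mul_lt_mul_of_pos_left hinner hkj]
    · rw [eqB t (le_of_lt h)]
      unfold ftB fl
      rw [div_mul_eq_mul_div, div_lt_div_iff₀ hμμqb hμqb]
      obtain ⟨E1, hE1⟩ : ∃ x, Real.exp (-μ * (t - τ)) = x := ⟨_, rfl⟩
      obtain ⟨E3, hE3⟩ : ∃ x, Real.exp (qb * (t - τ)) = x := ⟨_, rfl⟩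
      obtain ⟨p, hp⟩ : ∃ x, Real.exp (-μ * τ) = x := ⟨_, rfl⟩
      obtain ⟨Q, hQ⟩ : ∃ x, Real.exp (qb * τ) = x := ⟨_, rfl⟩
      have hE2eq : Real.exp (-μ * t) = E1 * p := by
        rw [← hE1, ← hp, ← Real.exp_add]; congr 1; ring
      have hXeq : Real.exp (qb * t) = E3 * Q := by
        rw [← hE3, ← hQ, ← Real.exp_add]; congr 1; ring
      have hE3gt : 1 < E3 := by
        rw [← hE3, ← Real.exp_zero]; exact Real.exp_lt_exp.2 (by nlinarith)
      have hE1lt : E1 < 1 := by rw [← hE1]; exact hexplt1 _ (by nlinarith)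
      have hE1pos : 0 < E1 := by rw [← hE1]; exact Real.exp_pos _
      have hppos : 0 < p := by rw [← hp]; exact Real.exp_pos _
      have hplt : p < 1 := by rw [← hp]; exact hexplt1 _ hτ
      have hpgt : 1 - μ * τ < p := by
        rw [← hp]
        have := Real.add_one_lt_exp (x := -μ * τ) (by nlinarith)
        linarith
      have hQgt : 1 + qb * τ < Q := by
        rw [← hQ]
        have := Real.add_one_lt_exp (ne_of_gt (mul_pos hqb hτ))
        linarith
      rw [hE2eq, hXeq, hE1, hE3]
      have g1 : E1 * (1 - p) < μ * τ := by nlinarith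
      have hQ1 : 0 < Q - 1 := by nlinarith [mul_pos hqb hτ]
      have g2 : qb * τ < E3 * (Q - 1) := by
        nlinarith [mul_pos (sub_pos.2 hE3gt) hQ1]
      have hinner : qb * (E1 - E1 * p) + μ * (E3 - E1 * p) < μ * (E3 * Q - E1 * p) := by
        linarith [mul_lt_mul_of_pos_left g1 hqb, mul_lt_mul_of_pos_left g2 hμ]
      linarith [mul_lt_mul_of_pos_left hinner (mul_pos hkj hμqb)]
  refine ⟨by simp [ftau, hτ.le], hcont.continuousOn, hdiff, hmono, htop, hquot, hGmono,
    hGtop, hfl⟩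
end
end

section
/- Let (w,v) be a solution of the system through (φ,ψ) ∈ 𝒟 on [−h,∞). If condition (3.2) holds (j(φ',ψ') ≤ k_j‖φ'‖ for all (φ',ψ') ∈ 𝒟), then v(t) ≤ e^{−μ t} ψ(0) + ‖φ‖ f_l(t) for all t > 0. If condition (3.3) holds (j(φ',ψ') ≤ k_j φ'(−τ(ψ')) for all (φ',ψ') ∈ 𝒟, where τ : C([-h,0],ℝ₊) → [τ̲,h)), then v(t) ≤ e^{−μ t} ψ(0) + ‖φ‖ f_τ(t) for all t > 0. -/
open scoped ENNReal

noncomputable section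

/-- Auxiliary comparison lemma: if `g' ≤ F'` on `(a,b)` then
`g b - g a ≤ F b - F a`. -/
lemma compA13 {g F : ℝ → ℝ} {a b : ℝ} (hab : a ≤ b)
    (hg : ContinuousOn g (Set.Icc a b)) (hF : ContinuousOn F (Set.Icc a b))
    (hd : ∀ s ∈ Set.Ioo a b, ∃ g' F' : ℝ, HasDerivAt g g' s ∧ HasDerivAt F F' s ∧ g' ≤ F') :
    g b - g a ≤ F b - F a := by
  have hmono : MonotoneOn (fun s => F s - g s) (Set.Icc a b) := by
    apply monotoneOn_of_deriv_nonneg (convex_Icc a b) (hF.sub hg)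
    · intro x hx
      rw [interior_Icc] at hx
      obtain ⟨g', F', hg', hF', _⟩ := hd x hx
      exact (hF'.sub hg').differentiableAt.differentiableWithinAt
    · intro x hx
      rw [interior_Icc] at hx
      obtain ⟨g', F', hg', hF', hle⟩ := hd x hx
      rw [(hF'.sub hg').deriv]
      linarith
  have h2 := hmono (Set.left_mem_Icc.mpr hab) (Set.right_mem_Icc.mpr hab) hab
  simp only at h2
  linarith

/-- Auxiliary algebra. -/
lemma alg13a (μ kj N E X v0 : ℝ) (hμ : μ ≠ 0) (e1 : E * X = 1) :
    E * (v0 + kj * N / μ * (X - 1)) = E * v0 + N * (kj / μ * (1 - E)) := by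
  field_simp
  linear_combination kj * N * e1

/-- Auxiliary algebra. -/
lemma alg13b (μ qbar kj N E X Y v0 : ℝ) (hμ : μ ≠ 0) (hq : μ + qbar ≠ 0) :
    E * (v0 + kj * N / μ * (X - 1) + (kj * N / (μ + qbar) * Y - kj * N / (μ + qbar) * X)) =
    E * v0 + N * (kj * (qbar * (E * X - E) + μ * (E * Y - E)) / (μ * (μ + qbar))) := by
  field_simp
  ring

/-- Lemma 3.4. For a solution (w,v) through (φ,ψ) ∈ 𝒟: under
condition (3.2), v(t) ≤ e^{-μt}ψ(0) + ‖φ‖ f_l(t) for all t > 0; under condition (3.3),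
v(t) ≤ e^{-μt}ψ(0) + ‖φ‖ f_τ(t) for all t > 0. -/
theorem statement13 (h : ℝ) (hh : 0 < h) (μ : ℝ) (hμ : 0 < μ)
    (q : ℝ → ℝ) (qbar : ℝ) (hqbar : 0 < qbar) (hq : ∀ z : ℝ, 0 ≤ z → q z ≤ qbar)
    (kj tlo : ℝ) (hkj : 0 < kj) (htlo : 0 < tlo) (htloh : tlo < h)
    (j : HistR h → HistR h → ℝ)
    (hjpos : ∀ φ' ψ' : HistR h, (∀ θ, 0 ≤ φ' θ) → (∀ θ, 0 ≤ ψ' θ) → 0 ≤ j φ' ψ')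
    (φ ψ : HistR h) (w v : C(ℝ, ℝ)) (hsol : IsSolSys h μ q j φ ψ w v) :
    -- condition (3.2) implies the f_l estimate
    ((∀ φ' ψ' : HistR h, (∀ θ, 0 ≤ φ' θ) → (∀ θ, 0 ≤ ψ' θ) → j φ' ψ' ≤ kj * ‖φ'‖) →
      ∀ t : ℝ, 0 < t →
        v t ≤ Real.exp (-μ * t) * ψ ⟨0, Set.mem_Icc.mpr ⟨by linarith, le_refl 0⟩⟩ +
          ‖φ‖ * fl μ qbar kj t) ∧
    -- condition (3.3) implies the f_τ estimate
    (∀ τfun : HistR h → ℝ, ∀ hτ : (∀ ψ' : HistR h, τfun ψ' ∈ Set.Ico tlo h),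
      (∀ φ' ψ' : HistR h, (∀ θ, 0 ≤ φ' θ) → (∀ θ, 0 ≤ ψ' θ) →
        j φ' ψ' ≤ kj * φ' ⟨-τfun ψ', Set.mem_Icc.mpr
          ⟨by have := (hτ ψ').2; linarith, by have := (hτ ψ').1; linarith⟩⟩) →
      ∀ t : ℝ, 0 < t →
        v t ≤ Real.exp (-μ * t) * ψ ⟨0, Set.mem_Icc.mpr ⟨by linarith, le_refl 0⟩⟩ +
          ‖φ‖ * ftau μ qbar kj tlo t) := by
  obtain ⟨hpos, hw0, hv0, hder⟩ := hsol
  have hφn : (0:ℝ) ≤ ‖φ‖ := norm_nonneg φ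
  have hμq : (0:ℝ) < μ + qbar := by linarith
  -- values of φ, ψ from w, v
  have hwφ : ∀ θ : Set.Icc (-h) (0:ℝ), φ θ = w θ.1 := by
    intro θ
    have := DFunLike.congr_fun hw0 θ
    simpa [segR] using this.symm
  have hψ0 : ∀ p : (0:ℝ) ∈ Set.Icc (-h) (0:ℝ), ψ ⟨0, p⟩ = v 0 := by
    intro p
    have := DFunLike.congr_fun hv0 (⟨0, p⟩ : Set.Icc (-h) (0:ℝ))
    simpa [segR] using this.symm
  -- monotonicity of qe
  have qemono : Monotone (qe qbar) := by
    intro a b hab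
    unfold qe
    by_cases ha : a ≤ 0
    · rw [if_pos ha]
      by_cases hb : b ≤ 0
      · rw [if_pos hb]
      · rw [if_neg hb]
        have h1 : (0:ℝ) ≤ qbar * b := by nlinarith [not_le.mp hb]
        calc (1:ℝ) = Real.exp 0 := Real.exp_zero.symm
          _ ≤ _ := Real.exp_le_exp.mpr h1
    · have hb : ¬ b ≤ 0 := fun hb => ha (hab.trans hb)
      rw [if_neg ha, if_neg hb]
      exact Real.exp_le_exp.mpr (by nlinarith [not_le.mp ha])
  -- exponential bound on w
  have wexp : ∀ s : ℝ, 0 ≤ s → w s ≤ w 0 * Real.exp (qbar * s) := by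
    intro s hs
    rcases eq_or_lt_of_le hs with heq | hs'
    · rw [← heq]; simp
    · have key : (fun r => w r * Real.exp (-qbar * r)) s -
          (fun r => w r * Real.exp (-qbar * r)) 0 ≤ (fun _ : ℝ => (0:ℝ)) s - (fun _ : ℝ => (0:ℝ)) 0 := by
        apply compA13 hs'.le
        · exact (w.continuous.mul (Real.continuous_exp.comp
            (continuous_const.mul continuous_id))).continuousOn
        · exact continuousOn_const
        · intro x hx
          obtain ⟨hwd, -⟩ := hder x hx.1
          have hexp : HasDerivAt (fun r : ℝ => Real.exp (-qbar * r))
              (Real.exp (-qbar * x) * (-qbar)) x := by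
            simpa using ((hasDerivAt_id x).const_mul (-qbar)).exp
          refine ⟨_, 0, hwd.mul hexp, hasDerivAt_const x 0, ?_⟩
          have hwx : 0 ≤ w x := (hpos x (by linarith [hx.1])).1
          have hvx : 0 ≤ v x := (hpos x (by linarith [hx.1])).2
          have hqx : q (v x) ≤ qbar := hq _ hvx
          have hex : 0 < Real.exp (-qbar * x) := Real.exp_pos _
          nlinarith [mul_nonneg hwx hex.le]
      simp only at key
      have key' : w s * Real.exp (-qbar * s) ≤ w 0 := by
        have h0 : Real.exp (-qbar * 0) = 1 := by norm_num
        rw [h0, mul_one] at key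
        linarith
      have e1 : Real.exp (-qbar * s) * Real.exp (qbar * s) = 1 := by
        rw [← Real.exp_add]; norm_num
      have h2 := mul_le_mul_of_nonneg_right key' (Real.exp_pos (qbar * s)).le
      calc w s = w s * (Real.exp (-qbar * s) * Real.exp (qbar * s)) := by rw [e1, mul_one]
        _ = w s * Real.exp (-qbar * s) * Real.exp (qbar * s) := by ring
        _ ≤ w 0 * Real.exp (qbar * s) := h2
  -- norm bound on w via qe
  have wnorm : ∀ s : ℝ, -h ≤ s → w s ≤ ‖φ‖ * qe qbar s := by
    intro s hs
    have hφb : ∀ θ : Set.Icc (-h) (0:ℝ), w θ.1 ≤ ‖φ‖ := by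
      intro θ
      calc w θ.1 = φ θ := (hwφ θ).symm
        _ ≤ |φ θ| := le_abs_self _
        _ ≤ ‖φ‖ := by
            have := φ.norm_coe_le_norm θ
            simpa [Real.norm_eq_abs] using this
    by_cases hs0 : s ≤ 0
    · rw [qe, if_pos hs0, mul_one]
      exact hφb ⟨s, Set.mem_Icc.mpr ⟨hs, hs0⟩⟩
    · push_neg at hs0
      rw [qe, if_neg (not_le.mpr hs0)]
      have h2 : w 0 ≤ ‖φ‖ := hφb ⟨0, Set.mem_Icc.mpr ⟨by linarith, le_refl 0⟩⟩
      calc w s ≤ w 0 * Real.exp (qbar * s) := wexp s hs0.le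
        _ ≤ ‖φ‖ * Real.exp (qbar * s) :=
            mul_le_mul_of_nonneg_right h2 (Real.exp_pos _).le
  -- nonnegativity of segments
  have hsegw : ∀ s : ℝ, 0 ≤ s → ∀ θ : Set.Icc (-h) (0:ℝ), 0 ≤ (segR w s : HistR h) θ := by
    intro s hs θ
    have hθ := θ.2
    rw [Set.mem_Icc] at hθ
    show 0 ≤ w (s + θ.1)
    exact (hpos (s + θ.1) (by linarith [hθ.1])).1
  have hsegv : ∀ s : ℝ, 0 ≤ s → ∀ θ : Set.Icc (-h) (0:ℝ), 0 ≤ (segR v s : HistR h) θ := by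
    intro s hs θ
    have hθ := θ.2
    rw [Set.mem_Icc] at hθ
    show 0 ≤ v (s + θ.1)
    exact (hpos (s + θ.1) (by linarith [hθ.1])).2
  -- master Gronwall step
  have master : ∀ a b : ℝ, 0 ≤ a → a < b → ∀ F F' : ℝ → ℝ,
      (∀ s ∈ Set.Ioo a b, HasDerivAt F (F' s) s) →
      ContinuousOn F (Set.Icc a b) →
      (∀ s ∈ Set.Ioo a b, Real.exp (μ * s) * j (segR w s) (segR v s) ≤ F' s) →
      Real.exp (μ * b) * v b - Real.exp (μ * a) * v a ≤ F b - F a := by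
    intro a b ha hab F F' hF' hFc hbnd
    have hd : ∀ s ∈ Set.Ioo a b, ∃ g' G' : ℝ,
        HasDerivAt (fun r => Real.exp (μ * r) * v r) g' s ∧ HasDerivAt F G' s ∧ g' ≤ G' := by
      intro s hs
      have hs0 : 0 < s := lt_of_le_of_lt ha hs.1
      obtain ⟨-, hv'⟩ := hder s hs0
      have he : HasDerivAt (fun r : ℝ => Real.exp (μ * r)) (Real.exp (μ * s) * μ) s := by
        simpa using ((hasDerivAt_id s).const_mul μ).exp
      refine ⟨_, F' s, he.mul hv', hF' s hs, ?_⟩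
      have hb := hbnd s hs
      have hring : Real.exp (μ * s) * μ * v s +
          Real.exp (μ * s) * (-μ * v s + j (segR w s) (segR v s))
          = Real.exp (μ * s) * j (segR w s) (segR v s) := by ring
      rw [hring]
      exact hb
    have key := compA13 (g := fun r => Real.exp (μ * r) * v r) hab.le
      ((Real.continuous_exp.comp (continuous_const.mul continuous_id)).mul
        v.continuous).continuousOn hFc hd
    simpa using key
  constructor
  · -- part (3.2)
    intro h32 t ht
    have jb32 : ∀ s : ℝ, 0 < s →
        j (segR w s) (segR v s) ≤ kj * (‖φ‖ * Real.exp (qbar * s)) := by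
      intro s hs
      have h1 := h32 (segR w s) (segR v s) (hsegw s hs.le) (hsegv s hs.le)
      have h2 : ‖(segR w s : HistR h)‖ ≤ ‖φ‖ * Real.exp (qbar * s) := by
        rw [ContinuousMap.norm_le _ (by positivity)]
        intro θ
        have hθ := θ.2
        rw [Set.mem_Icc] at hθ
        have hnn : 0 ≤ w (s + θ.1) := (hpos _ (by linarith [hθ.1])).1
        have hb := wnorm (s + θ.1) (by linarith [hθ.1])
        have hq2 : qe qbar (s + θ.1) ≤ qe qbar s := qemono (by linarith [hθ.2])
        have hq3 : qe qbar s = Real.exp (qbar * s) := by rw [qe, if_neg (not_le.mpr hs)]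
        show ‖w (s + θ.1)‖ ≤ _
        rw [Real.norm_eq_abs, abs_of_nonneg hnn]
        calc w (s + θ.1) ≤ ‖φ‖ * qe qbar (s + θ.1) := hb
          _ ≤ ‖φ‖ * qe qbar s := mul_le_mul_of_nonneg_left hq2 hφn
          _ = ‖φ‖ * Real.exp (qbar * s) := by rw [hq3]
      calc j (segR w s) (segR v s) ≤ kj * ‖(segR w s : HistR h)‖ := h1
        _ ≤ kj * (‖φ‖ * Real.exp (qbar * s)) := mul_le_mul_of_nonneg_left h2 hkj.le
    have hF' : ∀ s ∈ Set.Ioo 0 t,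
        HasDerivAt (fun r => kj * ‖φ‖ / (μ + qbar) * Real.exp ((μ + qbar) * r))
          (kj * ‖φ‖ * Real.exp ((μ + qbar) * s)) s := by
      intro s _
      have h1 : HasDerivAt (fun r : ℝ => Real.exp ((μ + qbar) * r))
          (Real.exp ((μ + qbar) * s) * (μ + qbar)) s := by
        simpa using ((hasDerivAt_id s).const_mul (μ + qbar)).exp
      have h2 := h1.const_mul (kj * ‖φ‖ / (μ + qbar))
      refine h2.congr_deriv ?_
      field_simp
    have hbnd : ∀ s ∈ Set.Ioo 0 t,
        Real.exp (μ * s) * j (segR w s) (segR v s) ≤ kj * ‖φ‖ * Real.exp ((μ + qbar) * s) := by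
      intro s hs
      have h1 := jb32 s hs.1
      calc Real.exp (μ * s) * j (segR w s) (segR v s)
          ≤ Real.exp (μ * s) * (kj * (‖φ‖ * Real.exp (qbar * s))) :=
            mul_le_mul_of_nonneg_left h1 (Real.exp_pos _).le
        _ = kj * ‖φ‖ * Real.exp ((μ + qbar) * s) := by
            rw [show (μ + qbar) * s = μ * s + qbar * s by ring, Real.exp_add]; ring
    have key : Real.exp (μ * t) * v t - Real.exp (μ * 0) * v 0 ≤
        kj * ‖φ‖ / (μ + qbar) * Real.exp ((μ + qbar) * t) -
        kj * ‖φ‖ / (μ + qbar) * Real.exp ((μ + qbar) * 0) :=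
      master 0 t le_rfl ht _ _ hF'
        (continuous_const.mul (Real.continuous_exp.comp
          (continuous_const.mul continuous_id))).continuousOn hbnd
    have h00 : Real.exp (μ * 0) = 1 := by norm_num
    have h01 : Real.exp ((μ + qbar) * 0) = 1 := by norm_num
    rw [h00, h01, one_mul, mul_one] at key
    have e1 : Real.exp (-μ * t) * Real.exp (μ * t) = 1 := by
      rw [← Real.exp_add]; norm_num
    have e2 : Real.exp (-μ * t) * Real.exp ((μ + qbar) * t) = Real.exp (qbar * t) := by
      rw [← Real.exp_add]; congr 1; ring
    rw [hψ0]
    unfold fl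
    calc v t = Real.exp (-μ * t) * (Real.exp (μ * t) * v t) := by
          rw [← mul_assoc, e1, one_mul]
      _ ≤ Real.exp (-μ * t) * (v 0 + (kj * ‖φ‖ / (μ + qbar) * Real.exp ((μ + qbar) * t) -
            kj * ‖φ‖ / (μ + qbar))) := by
          apply mul_le_mul_of_nonneg_left _ (Real.exp_pos _).le
          linarith
      _ = Real.exp (-μ * t) * v 0 +
            ‖φ‖ * (kj / (μ + qbar) * (Real.exp (qbar * t) - Real.exp (-μ * t))) := by
          rw [← e2]
          field_simp
  · -- part (3.3)
    intro τfun hτ h33 t ht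
    have jb33 : ∀ s : ℝ, 0 < s →
        j (segR w s) (segR v s) ≤ kj * (‖φ‖ * qe qbar (s - tlo)) := by
      intro s hs
      have h1 := h33 (segR w s) (segR v s) (hsegw s hs.le) (hsegv s hs.le)
      have hτm := hτ (segR v s)
      refine h1.trans (mul_le_mul_of_nonneg_left ?_ hkj.le)
      show w (s + -(τfun (segR v s))) ≤ ‖φ‖ * qe qbar (s - tlo)
      have hge : -h ≤ s + -(τfun (segR v s)) := by
        have := hτm.2
        rw [Set.mem_Ico] at hτm
        linarith [hτm.2]
      calc w (s + -(τfun (segR v s))) ≤ ‖φ‖ * qe qbar (s + -(τfun (segR v s))) := wnorm _ hge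
        _ ≤ ‖φ‖ * qe qbar (s - tlo) := by
            apply mul_le_mul_of_nonneg_left _ hφn
            apply qemono
            rw [Set.mem_Ico] at hτm
            linarith [hτm.1]
    -- Stage 1 bound : for 0 < b ≤ tlo
    have stage1 : ∀ b : ℝ, 0 < b → b ≤ tlo →
        Real.exp (μ * b) * v b ≤ v 0 + kj * ‖φ‖ / μ * (Real.exp (μ * b) - 1) := by
      intro b hb hbt
      have hF' : ∀ s ∈ Set.Ioo 0 b,
          HasDerivAt (fun r => kj * ‖φ‖ / μ * Real.exp (μ * r))
            (kj * ‖φ‖ * Real.exp (μ * s)) s := by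
        intro s _
        have h1 : HasDerivAt (fun r : ℝ => Real.exp (μ * r)) (Real.exp (μ * s) * μ) s := by
          simpa using ((hasDerivAt_id s).const_mul μ).exp
        have h2 := h1.const_mul (kj * ‖φ‖ / μ)
        refine h2.congr_deriv ?_
        field_simp
      have hbnd : ∀ s ∈ Set.Ioo 0 b,
          Real.exp (μ * s) * j (segR w s) (segR v s) ≤ kj * ‖φ‖ * Real.exp (μ * s) := by
        intro s hs
        have h1 := jb33 s hs.1
        have hqe : qe qbar (s - tlo) = 1 := by
          rw [qe, if_pos (by linarith [hs.2] : s - tlo ≤ 0)]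
        rw [hqe, mul_one] at h1
        calc Real.exp (μ * s) * j (segR w s) (segR v s)
            ≤ Real.exp (μ * s) * (kj * ‖φ‖) :=
              mul_le_mul_of_nonneg_left h1 (Real.exp_pos _).le
          _ = kj * ‖φ‖ * Real.exp (μ * s) := by ring
      have key : Real.exp (μ * b) * v b - Real.exp (μ * 0) * v 0 ≤
          kj * ‖φ‖ / μ * Real.exp (μ * b) - kj * ‖φ‖ / μ * Real.exp (μ * 0) :=
        master 0 b le_rfl hb _ _ hF'
          (continuous_const.mul (Real.continuous_exp.comp
            (continuous_const.mul continuous_id))).continuousOn hbnd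
      have h00 : Real.exp (μ * 0) = 1 := by norm_num
      rw [h00, one_mul, mul_one] at key
      linarith
    rw [hψ0]
    have e1 : Real.exp (-μ * t) * Real.exp (μ * t) = 1 := by
      rw [← Real.exp_add]; norm_num
    by_cases htle : t ≤ tlo
    · -- case t ≤ tlo
      have key := stage1 t ht htle
      unfold ftau
      rw [if_pos htle]
      calc v t = Real.exp (-μ * t) * (Real.exp (μ * t) * v t) := by
            rw [← mul_assoc, e1, one_mul]
        _ ≤ Real.exp (-μ * t) * (v 0 + kj * ‖φ‖ / μ * (Real.exp (μ * t) - 1)) :=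
            mul_le_mul_of_nonneg_left key (Real.exp_pos _).le
        _ = Real.exp (-μ * t) * v 0 + ‖φ‖ * (kj / μ * (1 - Real.exp (-μ * t))) := by
            exact alg13a μ kj ‖φ‖ _ _ (v 0) (ne_of_gt hμ) e1
    · -- case tlo < t
      push_neg at htle
      have k1 := stage1 tlo htlo le_rfl
      have hF2' : ∀ s ∈ Set.Ioo tlo t,
          HasDerivAt (fun r => kj * ‖φ‖ / (μ + qbar) * Real.exp ((μ + qbar) * r - qbar * tlo))
            (kj * ‖φ‖ * Real.exp ((μ + qbar) * s - qbar * tlo)) s := by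
        intro s _
        have h1 : HasDerivAt (fun r : ℝ => (μ + qbar) * r - qbar * tlo) (μ + qbar) s := by
          simpa using ((hasDerivAt_id s).const_mul (μ + qbar)).sub_const (qbar * tlo)
        have h2 := (h1.exp).const_mul (kj * ‖φ‖ / (μ + qbar))
        refine h2.congr_deriv ?_
        field_simp
      have hbnd2 : ∀ s ∈ Set.Ioo tlo t,
          Real.exp (μ * s) * j (segR w s) (segR v s) ≤
            kj * ‖φ‖ * Real.exp ((μ + qbar) * s - qbar * tlo) := by
        intro s hs
        have h1 := jb33 s (htlo.trans hs.1)
        have hqe : qe qbar (s - tlo) = Real.exp (qbar * (s - tlo)) := by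
          rw [qe, if_neg (by linarith [hs.1] : ¬ s - tlo ≤ 0)]
        rw [hqe] at h1
        calc Real.exp (μ * s) * j (segR w s) (segR v s)
            ≤ Real.exp (μ * s) * (kj * (‖φ‖ * Real.exp (qbar * (s - tlo)))) :=
              mul_le_mul_of_nonneg_left h1 (Real.exp_pos _).le
          _ = kj * ‖φ‖ * Real.exp ((μ + qbar) * s - qbar * tlo) := by
              rw [show (μ + qbar) * s - qbar * tlo = μ * s + qbar * (s - tlo) by ring,
                Real.exp_add]
              ring
      have key2 : Real.exp (μ * t) * v t - Real.exp (μ * tlo) * v tlo ≤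
          kj * ‖φ‖ / (μ + qbar) * Real.exp ((μ + qbar) * t - qbar * tlo) -
          kj * ‖φ‖ / (μ + qbar) * Real.exp ((μ + qbar) * tlo - qbar * tlo) :=
        master tlo t htlo.le htle _ _ hF2'
          (continuous_const.mul (Real.continuous_exp.comp (by fun_prop))).continuousOn hbnd2
      have hμtlo : Real.exp ((μ + qbar) * tlo - qbar * tlo) = Real.exp (μ * tlo) := by
        congr 1; ring
      rw [hμtlo] at key2
      have e3 : Real.exp (-μ * (t - tlo)) = Real.exp (-μ * t) * Real.exp (μ * tlo) := by
        rw [← Real.exp_add]; congr 1; ring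
      have e4 : Real.exp (qbar * (t - tlo)) =
          Real.exp (-μ * t) * Real.exp ((μ + qbar) * t - qbar * tlo) := by
        rw [← Real.exp_add]; congr 1; ring
      unfold ftau
      rw [if_neg (not_le.mpr htle)]
      calc v t = Real.exp (-μ * t) * (Real.exp (μ * t) * v t) := by
            rw [← mul_assoc, e1, one_mul]
        _ ≤ Real.exp (-μ * t) * (v 0 + kj * ‖φ‖ / μ * (Real.exp (μ * tlo) - 1) +
              (kj * ‖φ‖ / (μ + qbar) * Real.exp ((μ + qbar) * t - qbar * tlo) -
               kj * ‖φ‖ / (μ + qbar) * Real.exp (μ * tlo))) := by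
            apply mul_le_mul_of_nonneg_left _ (Real.exp_pos _).le
            have hexptlo : (0:ℝ) < Real.exp (μ * tlo) := Real.exp_pos _
            nlinarith [k1, key2]
        _ = Real.exp (-μ * t) * v 0 +
              ‖φ‖ * (kj * (qbar * (Real.exp (-μ * (t - tlo)) - Real.exp (-μ * t)) +
                μ * (Real.exp (qbar * (t - tlo)) - Real.exp (-μ * t))) / (μ * (μ + qbar))) := by
            rw [e3, e4]
            exact alg13b μ qbar kj ‖φ‖ _ _ _ (v 0) (ne_of_gt hμ) (ne_of_gt hμq)
end
end
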